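/- arXiv:1610.01552 — 5 statements merged into one kernel-verified Lean document; each statement's English description precedes it below -/
import Mathlib

section
/- Let 𝒢 be a real Hilbert space and let φ ∈ Γ₀(𝒢). Then the perspective φ̃ of φ belongs to Γ₀(ℝ ⊕ 𝒢), i.e., φ̃ is a proper, lower semicontinuous, convex function on the Hilbert direct sum ℝ ⊕ 𝒢. -/
open scoped RealInnerProductSpace Classical

noncomputable section

/-- Properness for extended-real-valued functions. -/
def IsProperE {G : Type*} (f : G → EReal) : Prop :=
  (∀ x, f x ≠ ⊥) ∧ ∃ x, f x ≠ ⊤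

/-- Convexity for extended-real-valued functions. -/
def ConvexE (G : Type*) [AddCommGroup G] [Module ℝ G] (f : G → EReal) : Prop :=
  ∀ x y : G, ∀ a b : ℝ, 0 ≤ a → 0 ≤ b → a + b = 1 →
    f (a • x + b • y) ≤ (a : EReal) * f x + (b : EReal) * f y

/-- The class Γ₀: proper, lower semicontinuous, convex. -/
def Gamma0 (G : Type*) [AddCommGroup G] [Module ℝ G] [TopologicalSpace G]
    (f : G → EReal) : Prop :=
  IsProperE f ∧ LowerSemicontinuous f ∧ ConvexE G f

/-- The recession function. -/
def recFn {G : Type*} [AddCommGroup G] (f : G → EReal) (y : G) : EReal :=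
  ⨆ x : {x : G // f x ≠ ⊤}, (f ((x : G) + y) - f (x : G))

/-- The perspective function. -/
def persp {G : Type*} [AddCommGroup G] [Module ℝ G] (f : G → EReal) : ℝ × G → EReal :=
  fun p => if 0 < p.1 then (p.1 : EReal) * f (p.1⁻¹ • p.2)
           else if p.1 = 0 then recFn f p.2 else ⊤

/-- The Fenchel conjugate. -/
def conjFn {G : Type*} [NormedAddCommGroup G] [InnerProductSpace ℝ G]
    (f : G → EReal) (u : G) : EReal :=
  ⨆ x : G, (((inner ℝ x u : ℝ) : EReal) - f x)

/-- The support function of a set. -/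
def suppFn {G : Type*} [NormedAddCommGroup G] [InnerProductSpace ℝ G]
    (D : Set G) (y : G) : EReal :=
  ⨆ u ∈ D, ((inner ℝ y u : ℝ) : EReal)

/-- The convex subdifferential. -/
def subdiff {G : Type*} [NormedAddCommGroup G] [InnerProductSpace ℝ G]
    (f : G → EReal) (x : G) : Set G :=
  {u | ∀ z : G, (((inner ℝ (z - x) u : ℝ) : EReal) + f x ≤ f z)}


set_option linter.unusedSectionVars false

section PerspHelpers

/- ### EReal helpers -/

lemma ps_mul_ne_bot {c : ℝ} (hc : 0 < c) {X : EReal} (hX : X ≠ ⊥) : (c:EReal) * X ≠ ⊥ := by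
  induction X with
  | bot => exact absurd rfl hX
  | coe x => simp [← EReal.coe_mul]
  | top => simp [EReal.coe_mul_top_of_pos hc]

lemma ps_mul_add {c : ℝ} (hc : 0 < c) {X Y : EReal} (hX : X ≠ ⊥) (hY : Y ≠ ⊥) :
    (c:EReal) * (X + Y) = (c:EReal) * X + (c:EReal) * Y := by
  induction X with
  | bot => exact absurd rfl hX
  | coe x =>
    induction Y with
    | bot => exact absurd rfl hY
    | coe y => push_cast [← EReal.coe_mul, ← EReal.coe_add]; ring_nf
    | top =>
      rw [EReal.add_top_of_ne_bot (EReal.coe_ne_bot x), EReal.coe_mul_top_of_pos hc,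
        EReal.add_top_of_ne_bot (ps_mul_ne_bot hc (EReal.coe_ne_bot x))]
  | top =>
    rw [EReal.top_add_of_ne_bot hY, EReal.coe_mul_top_of_pos hc,
      EReal.top_add_of_ne_bot (ps_mul_ne_bot hc hY)]

lemma ps_lt_sub_iff {c A : EReal} {r : ℝ} : c < A - (r:EReal) ↔ c + r < A :=
  EReal.lt_sub_iff_add_lt (Or.inl (EReal.coe_ne_bot r)) (Or.inl (EReal.coe_ne_top r))

lemma ps_sub_le_iff {A B : EReal} {r : ℝ} : A - (r:EReal) ≤ B ↔ A ≤ B + r :=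
  EReal.sub_le_iff_le_add (Or.inl (EReal.coe_ne_bot r)) (Or.inl (EReal.coe_ne_top r))

lemma ps_sub_ne_bot {A : EReal} (hA : A ≠ ⊥) (r : ℝ) : A - (r:EReal) ≠ ⊥ := by
  induction A with
  | bot => exact absurd rfl hA
  | coe a => rw [← EReal.coe_sub]; exact EReal.coe_ne_bot _
  | top => rw [EReal.top_sub_coe]; exact bot_lt_top.ne'

lemma ps_mul_mono {c : ℝ} (hc : 0 ≤ c) {X Y : EReal} (h : X ≤ Y) :
    (c:EReal) * X ≤ (c:EReal) * Y :=
  mul_le_mul_of_nonneg_left h (by exact_mod_cast hc)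

lemma ps_add_coe_lt_iff {c X : EReal} {r : ℝ} : c + (r:EReal) < X + (r:EReal) ↔ c < X := by
  constructor
  · intro h
    by_contra hcon
    exact absurd (add_le_add_left (not_lt.mp hcon) _) (not_le.mpr h)
  · exact fun h => EReal.add_lt_add_right_coe h r

lemma ps_lt_mul_iff {m η : ℝ} (hη : 0 < η) {X : EReal} :
    (m : EReal) < (η:EReal) * X ↔ ((m/η : ℝ) : EReal) < X := by
  induction X with
  | bot =>
    rw [EReal.mul_bot_of_pos (by exact_mod_cast hη)]
    simp
  | coe x =>
    rw [← EReal.coe_mul, EReal.coe_lt_coe_iff, EReal.coe_lt_coe_iff, div_lt_iff₀ hη,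
      mul_comm]
  | top =>
    rw [EReal.coe_mul_top_of_pos hη]
    simp [EReal.coe_lt_top]

/- ### recFn / persp basics -/

variable {G : Type*} [AddCommGroup G] [Module ℝ G] {φ : G → EReal}

lemma ps_real {x : G} (hb : φ x ≠ ⊥) (ht : φ x ≠ ⊤) : ∃ ρ : ℝ, φ x = (ρ : EReal) :=
  ⟨(φ x).toReal, (EReal.coe_toReal ht hb).symm⟩

lemma ps_le_recFn {x : G} (hx : φ x ≠ ⊤) (y : G) :
    φ (x + y) - φ x ≤ recFn φ y :=
  le_iSup (fun x : {x : G // φ x ≠ ⊤} => φ ((x:G) + y) - φ (x:G)) ⟨x, hx⟩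

lemma ps_recFn_ne_bot (hbot : ∀ x, φ x ≠ ⊥) {x₀ : G} (hx₀ : φ x₀ ≠ ⊤) (y : G) :
    recFn φ y ≠ ⊥ := by
  obtain ⟨ρ, hρ⟩ := ps_real (hbot x₀) hx₀
  have h2 : φ (x₀ + y) - φ x₀ ≠ ⊥ := by rw [hρ]; exact ps_sub_ne_bot (hbot _) ρ
  exact fun h => h2 (le_bot_iff.mp (h ▸ ps_le_recFn hx₀ y))

lemma persp_pos {η : ℝ} (hη : 0 < η) (y : G) :
    persp φ (η, y) = (η : EReal) * φ (η⁻¹ • y) := if_pos hη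

lemma persp_zero (y : G) : persp φ (0, y) = recFn φ y := by simp [persp]

lemma persp_neg {η : ℝ} (hη : η < 0) (y : G) : persp φ (η, y) = ⊤ := by
  rw [persp, if_neg (by simp [not_lt.mpr hη.le]), if_neg hη.ne]

lemma persp_ne_bot (hbot : ∀ x, φ x ≠ ⊥) {x₀ : G} (hx₀ : φ x₀ ≠ ⊤) (p : ℝ × G) :
    persp φ p ≠ ⊥ := by
  obtain ⟨η, y⟩ := p
  rcases lt_trichotomy η 0 with h | h | h
  · rw [persp_neg h]; exact bot_lt_top.ne'
  · subst h; rw [persp_zero]; exact ps_recFn_ne_bot hbot hx₀ y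
  · rw [persp_pos h]; exact ps_mul_ne_bot h (hbot _)



/- ### Multiplied convexity: lemma K -/

lemma ps_K (hbot : ∀ x, φ x ≠ ⊥) (hconv : ConvexE G φ)
    (x : G) (ρ : ℝ) (hρ : φ x = (ρ : EReal)) (y : G) {η : ℝ} (hη : 0 < η) :
    ((1+η : ℝ) : EReal) * φ ((1+η)⁻¹ • (x + y)) ≤ (ρ : EReal) + (η : EReal) * φ (η⁻¹ • y) := by
  have h1η : (0:ℝ) < 1 + η := by linarith
  set z := η⁻¹ • y with hz
  have harg : (1/(1+η)) • x + (η/(1+η)) • z = (1+η)⁻¹ • (x + y) := by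
    rw [hz, smul_smul, smul_add]
    congr 1
    · rw [one_div]
    · congr 1
      field_simp
  have hcv := hconv x z (1/(1+η)) (η/(1+η)) (by positivity) (by positivity)
    (by field_simp)
  rw [harg, hρ] at hcv
  have h2 := ps_mul_mono h1η.le hcv
  refine h2.trans (le_of_eq ?_)
  have hzb : ((η/(1+η) : ℝ) : EReal) * φ z ≠ ⊥ := ps_mul_ne_bot (by positivity) (hbot z)
  have e1 : ((1+η : ℝ):EReal) * ((1/(1+η) : ℝ):EReal) = (1:EReal) := by
    rw [← EReal.coe_mul]
    norm_cast
    field_simp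
  have e2 : ((1+η : ℝ):EReal) * ((η/(1+η) : ℝ):EReal) = ((η:ℝ):EReal) := by
    rw [← EReal.coe_mul]
    norm_cast
    field_simp
  rw [ps_mul_add h1η (by rw [← EReal.coe_mul]; exact EReal.coe_ne_bot _) hzb,
    ← mul_assoc, ← mul_assoc, e1, e2, one_mul]

/- ### Lemma L : φ(x + t•y) ≤ φ x + t * recFn φ y -/

lemma ps_L (hbot : ∀ x, φ x ≠ ⊥) (hconv : ConvexE G φ)
    {x : G} (hx : φ x ≠ ⊤) (y : G) {t : ℝ} (ht : 0 < t) :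
    φ (x + t • y) ≤ φ x + (t : EReal) * recFn φ y := by
  by_cases htop : recFn φ y = ⊤
  · rw [htop, EReal.coe_mul_top_of_pos ht, EReal.add_top_of_ne_bot (hbot x)]
    exact le_top
  obtain ⟨ρ, hρ⟩ := ps_real (hbot x) hx
  set r : ℝ := (recFn φ y).toReal with hrdef
  have hr : recFn φ y = (r : EReal) :=
    (EReal.coe_toReal htop (ps_recFn_ne_bot hbot hx y)).symm
  -- step lemma
  have step : ∀ x' : G, φ x' ≠ ⊤ → ∀ ρ' : ℝ, φ x' = (ρ' : EReal) →
      φ (x' + y) ≤ ((ρ' + r : ℝ) : EReal) := by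
    intro x' hx' ρ' hρ'
    have h1 : φ (x' + y) - φ x' ≤ (r : EReal) := hr ▸ ps_le_recFn hx' y
    rw [hρ'] at h1
    have := ps_sub_le_iff.mp h1
    rw [EReal.coe_add, add_comm ((ρ':ℝ):EReal) ((r:ℝ):EReal)]
    exact this
  -- iterate
  have claim : ∀ n : ℕ, φ (x + (n:ℝ) • y) ≤ ((ρ + n * r : ℝ) : EReal) := by
    intro n
    induction n with
    | zero => simp [hρ]
    | succ n ih =>
      have hne : φ (x + (n:ℝ) • y) ≠ ⊤ :=
        (lt_of_le_of_lt ih (EReal.coe_lt_top _)).ne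
      obtain ⟨ρ', hρ'⟩ := ps_real (hbot _) hne
      have h2 : φ ((x + (n:ℝ) • y) + y) ≤ ((ρ' + r : ℝ) : EReal) := step _ hne ρ' hρ'
      have h3 : ((ρ' : ℝ) : EReal) ≤ ((ρ + n*r : ℝ) : EReal) := hρ' ▸ ih
      have h4 : ρ' ≤ ρ + n*r := by exact_mod_cast h3
      have h5 : (x + (n:ℝ) • y) + y = x + ((n+1 : ℕ):ℝ) • y := by
        push_cast
        rw [add_smul, one_smul, add_assoc]
      rw [← h5]
      refine h2.trans ?_
      apply EReal.coe_le_coe_iff.mpr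
      push_cast
      linarith
  -- choose n ≥ t
  obtain ⟨n, hn⟩ := exists_nat_ge t
  have hn0 : 0 < (n:ℝ) := lt_of_lt_of_le ht hn
  have hnne : (n:ℝ) ≠ 0 := hn0.ne'
  have hcv := hconv x (x + (n:ℝ) • y) (1 - t/n) (t/n)
    (by rw [sub_nonneg]; exact div_le_one_of_le₀ hn hn0.le)
    (by positivity) (by ring)
  have harg : (1 - t/n) • x + (t/n) • (x + (n:ℝ) • y) = x + t • y := by
    rw [smul_add, smul_smul, ← add_assoc, ← add_smul]
    congr 1
    · rw [sub_add_cancel, one_smul]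
    · congr 1
      field_simp
  rw [harg, hρ] at hcv
  refine hcv.trans ?_
  have h6 : ((t/n : ℝ) : EReal) * φ (x + (n:ℝ) • y) ≤ ((t/n : ℝ) : EReal) * ((ρ + n*r : ℝ) : EReal) :=
    ps_mul_mono (by positivity) (claim n)
  calc ((1 - t/n : ℝ) : EReal) * (ρ:EReal) + ((t/n : ℝ) : EReal) * φ (x + (n:ℝ) • y)
      ≤ ((1 - t/n : ℝ) : EReal) * (ρ:EReal) + ((t/n : ℝ) : EReal) * ((ρ + n*r : ℝ) : EReal) :=
        add_le_add_right h6 _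
    _ = ((ρ + t * r : ℝ) : EReal) := by
        rw [← EReal.coe_mul, ← EReal.coe_mul, ← EReal.coe_add]
        congr 1
        field_simp
        ring
    _ = φ x + (t : EReal) * recFn φ y := by
        rw [hρ, hr, ← EReal.coe_mul, ← EReal.coe_add]

/- ### recFn is convex -/

lemma ps_recFn_convex (hbot : ∀ x, φ x ≠ ⊥) (hconv : ConvexE G φ)
    (y₁ y₂ : G) {a b : ℝ} (ha : 0 < a) (hb : 0 < b) (hab : a + b = 1) :
    recFn φ (a • y₁ + b • y₂) ≤ (a:EReal) * recFn φ y₁ + (b:EReal) * recFn φ y₂ := by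
  apply iSup_le
  rintro ⟨x, hx⟩
  obtain ⟨ρ, hρ⟩ := ps_real (hbot x) hx
  simp only
  have h1 : x + (a • y₁ + b • y₂) = a • (x + y₁) + b • (x + y₂) := by
    have hx1 : a • x + b • x = x := by rw [← add_smul, hab, one_smul]
    rw [smul_add, smul_add]
    nth_rewrite 1 [← hx1]
    abel
  have hcv := hconv (x + y₁) (x + y₂) a b ha.le hb.le hab
  rw [← h1] at hcv
  have hA : φ (x + y₁) ≤ recFn φ y₁ + (ρ:EReal) := by
    have := ps_le_recFn hx y₁; rw [hρ] at this; exact ps_sub_le_iff.mp this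
  have hB : φ (x + y₂) ≤ recFn φ y₂ + (ρ:EReal) := by
    have := ps_le_recFn hx y₂; rw [hρ] at this; exact ps_sub_le_iff.mp this
  rw [hρ]
  rw [ps_sub_le_iff]
  refine hcv.trans ?_
  have hr1 := ps_recFn_ne_bot hbot hx y₁
  have hr2 := ps_recFn_ne_bot hbot hx y₂
  calc (a:EReal) * φ (x + y₁) + (b:EReal) * φ (x + y₂)
      ≤ (a:EReal) * (recFn φ y₁ + (ρ:EReal)) + (b:EReal) * (recFn φ y₂ + (ρ:EReal)) :=
        add_le_add (ps_mul_mono ha.le hA) (ps_mul_mono hb.le hB)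
    _ = ((a:EReal) * recFn φ y₁ + ((a*ρ : ℝ):EReal)) + ((b:EReal) * recFn φ y₂ + ((b*ρ:ℝ):EReal)) := by
        rw [ps_mul_add ha hr1 (EReal.coe_ne_bot ρ), ps_mul_add hb hr2 (EReal.coe_ne_bot ρ),
          ← EReal.coe_mul, ← EReal.coe_mul]
    _ = ((a:EReal) * recFn φ y₁ + (b:EReal) * recFn φ y₂) + (((a*ρ:ℝ):EReal) + ((b*ρ:ℝ):EReal)) := by
        abel
    _ = (a:EReal) * recFn φ y₁ + (b:EReal) * recFn φ y₂ + (ρ:EReal) := by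
        rw [← EReal.coe_add]
        congr 1
        norm_cast
        linear_combination ρ * hab

/- ### mixed case : p.1 = 0, q.1 > 0 -/

lemma ps_mixed (hbot : ∀ x, φ x ≠ ⊥) (hconv : ConvexE G φ)
    (y₁ : G) {η₂ : ℝ} (hη₂ : 0 < η₂) (y₂ : G) {a b : ℝ} (ha : 0 < a) (hb : 0 < b)
    {x₀ : G} (hx₀ : φ x₀ ≠ ⊤) :
    persp φ (a • ((0:ℝ), y₁) + b • (η₂, y₂)) ≤
      (a:EReal) * persp φ (0, y₁) + (b:EReal) * persp φ (η₂, y₂) := by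
  have hbe : 0 < b * η₂ := mul_pos hb hη₂
  have hpt : a • ((0:ℝ), y₁) + b • (η₂, y₂) = ((b*η₂ : ℝ), a • y₁ + b • y₂) := by
    simp [Prod.ext_iff, smul_eq_mul]
  rw [hpt, persp_pos hbe, persp_zero, persp_pos hη₂]
  set z := η₂⁻¹ • y₂ with hzdef
  set t := a / (b*η₂) with htdef
  have ht : 0 < t := by positivity
  have hb' : b ≠ 0 := hb.ne'
  have hη₂' : η₂ ≠ 0 := hη₂.ne'
  have harg : (b*η₂)⁻¹ • (a • y₁ + b • y₂) = z + t • y₁ := by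
    rw [hzdef, htdef, smul_add, smul_smul, smul_smul, add_comm]
    congr 1
    · congr 1
      field_simp
    · congr 1
      field_simp
  rw [harg]
  by_cases hz : φ z = ⊤
  · rw [hz, EReal.coe_mul_top_of_pos hη₂, EReal.coe_mul_top_of_pos hb,
      EReal.add_top_of_ne_bot (ps_mul_ne_bot ha (ps_recFn_ne_bot hbot hx₀ y₁))]
    exact le_top
  obtain ⟨ρ, hρ⟩ := ps_real (hbot z) hz
  have hL := ps_L hbot hconv hz y₁ ht
  rw [hρ] at hL
  have h2 := ps_mul_mono hbe.le hL
  refine h2.trans (le_of_eq ?_)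
  have hrne := ps_recFn_ne_bot hbot hx₀ y₁
  rw [ps_mul_add hbe (EReal.coe_ne_bot ρ) (ps_mul_ne_bot ht hrne)]
  by_cases hT : recFn φ y₁ = ⊤
  · rw [hT, EReal.coe_mul_top_of_pos ht, EReal.coe_mul_top_of_pos hbe,
      EReal.coe_mul_top_of_pos ha, hρ,
      EReal.top_add_of_ne_bot (ps_mul_ne_bot hb (ps_mul_ne_bot hη₂ (EReal.coe_ne_bot ρ))),
      EReal.add_top_of_ne_bot (by rw [← EReal.coe_mul]; exact EReal.coe_ne_bot _)]
  · obtain ⟨r, hrr⟩ := ps_real hrne hT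
    rw [hrr, hρ]
    norm_cast
    rw [htdef]
    field_simp
    ring

/- ### both positive -/

lemma ps_pospos (hbot : ∀ x, φ x ≠ ⊥) (hconv : ConvexE G φ)
    {η₁ : ℝ} (hη₁ : 0 < η₁) (y₁ : G) {η₂ : ℝ} (hη₂ : 0 < η₂) (y₂ : G)
    {a b : ℝ} (ha : 0 < a) (hb : 0 < b) :
    persp φ (a • (η₁, y₁) + b • (η₂, y₂)) ≤
      (a:EReal) * persp φ (η₁, y₁) + (b:EReal) * persp φ (η₂, y₂) := by
  have hs : 0 < a * η₁ + b * η₂ := by positivity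
  set s := a * η₁ + b * η₂ with hsdef
  have hpt : a • (η₁, y₁) + b • (η₂, y₂) = ((s : ℝ), a • y₁ + b • y₂) := by
    simp [hsdef, Prod.ext_iff, smul_eq_mul]
  rw [hpt, persp_pos hs, persp_pos hη₁, persp_pos hη₂]
  set z₁ := η₁⁻¹ • y₁
  set z₂ := η₂⁻¹ • y₂
  have harg : s⁻¹ • (a • y₁ + b • y₂) = (a*η₁/s) • z₁ + (b*η₂/s) • z₂ := by
    rw [smul_add, smul_smul, smul_smul, smul_smul, smul_smul]
    congr 1
    · congr 1
      field_simp
    · congr 1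
      field_simp
  have hcv := hconv z₁ z₂ (a*η₁/s) (b*η₂/s) (by positivity) (by positivity)
    (by field_simp; linarith [hsdef])
  rw [← harg] at hcv
  have h2 := ps_mul_mono hs.le hcv
  refine h2.trans (le_of_eq ?_)
  have hb1 : ((a*η₁/s : ℝ):EReal) * φ z₁ ≠ ⊥ := ps_mul_ne_bot (by positivity) (hbot z₁)
  have hb2 : ((b*η₂/s : ℝ):EReal) * φ z₂ ≠ ⊥ := ps_mul_ne_bot (by positivity) (hbot z₂)
  rw [ps_mul_add hs hb1 hb2, ← mul_assoc, ← mul_assoc, ← EReal.coe_mul, ← EReal.coe_mul]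
  have e1 : s * (a*η₁/s) = a * η₁ := by field_simp
  have e2 : s * (b*η₂/s) = b * η₂ := by field_simp
  rw [e1, e2, EReal.coe_mul, EReal.coe_mul, mul_assoc, mul_assoc]

/- ### persp lemmas, component form -/

lemma persp_pos' {p : ℝ × G} (hp : 0 < p.1) :
    persp φ p = (p.1 : EReal) * φ (p.1⁻¹ • p.2) := if_pos hp

lemma persp_zero' {p : ℝ × G} (hp : p.1 = 0) : persp φ p = recFn φ p.2 := by
  rw [persp, if_neg (by simp [hp]), if_pos hp]

lemma persp_neg' {p : ℝ × G} (hp : p.1 < 0) : persp φ p = ⊤ := by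
  rw [persp, if_neg (by simp [not_lt.mpr hp.le]), if_neg hp.ne]


end PerspHelpers

/-- the perspective of `φ ∈ Γ₀(𝒢)` belongs to `Γ₀(ℝ ⊕ 𝒢)`. -/
theorem perspective_mem_Gamma0
    {G : Type*} [NormedAddCommGroup G] [InnerProductSpace ℝ G] [CompleteSpace G]
    (φ : G → EReal) (hφ : Gamma0 G φ) :
    Gamma0 (ℝ × G) (persp φ) := by
  obtain ⟨⟨hbot, x₀, hx₀⟩, hlsc, hconv⟩ := hφ
  refine ⟨⟨fun p => persp_ne_bot hbot hx₀ p, ⟨((1:ℝ), x₀), ?_⟩⟩, ?_, ?_⟩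
  · -- properness : persp (1, x₀) = φ x₀ ≠ ⊤
    rw [persp_pos one_pos]
    simp only [inv_one, one_smul, EReal.coe_one, one_mul]
    exact hx₀
  · -- lower semicontinuity
    rintro ⟨η₀, y₀⟩
    rcases lt_trichotomy η₀ 0 with hη₀ | hη₀ | hη₀
    · intro c hc
      have h0 : ∀ᶠ s : ℝ in nhds η₀, s < 0 :=
        Filter.eventually_of_mem (Iio_mem_nhds hη₀) (fun s hs => hs)
      filter_upwards [(continuous_fst.tendsto (η₀, y₀)).eventually h0] with q hq
      rw [persp_neg' hq]
      exact lt_of_lt_of_le hc le_top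
    · -- η₀ = 0
      subst hη₀
      intro c hc
      rw [persp_zero, recFn, gt_iff_lt, lt_iSup_iff] at hc
      obtain ⟨⟨x, hx⟩, hcx⟩ := hc
      obtain ⟨ρ, hρ⟩ := ps_real (hbot x) hx
      simp only at hcx
      rw [hρ] at hcx
      have hcρ : c + (ρ:EReal) < φ (x + y₀) := ps_lt_sub_iff.mp hcx
      obtain ⟨b, hb1, hb2⟩ := EReal.exists_between_coe_real hcρ
      obtain ⟨b', hb'1, hb'2⟩ := EReal.exists_between_coe_real hb1
      have hb'b : b' < b := by exact_mod_cast hb'2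
      set δ := min 1 ((b - b')/(1+|b|)) with hδdef
      have hδpos : 0 < δ := lt_min one_pos (div_pos (by linarith) (by positivity))
      have hg : ContinuousAt (fun q : ℝ × G => (1+q.1)⁻¹ • (x + q.2)) ((0:ℝ), y₀) := by
        apply ContinuousAt.smul
        · exact (continuousAt_const.add continuousAt_fst).inv₀ (by norm_num)
        · exact continuousAt_const.add continuousAt_snd
      have hgt : Filter.Tendsto (fun q : ℝ × G => (1+q.1)⁻¹ • (x + q.2))
          (nhds ((0:ℝ), y₀)) (nhds (x + y₀)) := by
        have hgp : (fun q : ℝ × G => (1+q.1)⁻¹ • (x + q.2)) ((0:ℝ), y₀) = x + y₀ := by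
          norm_num
        rw [← hgp]
        exact hg
      have hev1 : ∀ᶠ q : ℝ × G in nhds ((0:ℝ), y₀),
          (b:EReal) < φ ((1+q.1)⁻¹ • (x + q.2)) :=
        hgt.eventually (hlsc (x + y₀) (b:EReal) hb2)
      have hev2 : ∀ᶠ q : ℝ × G in nhds ((0:ℝ), y₀), |q.1| < δ := by
        have h0 : ∀ᶠ s : ℝ in nhds (0:ℝ), |s| < δ := by
          filter_upwards [Metric.ball_mem_nhds (0:ℝ) hδpos] with s hs
          simpa [Real.dist_eq] using hs
        exact (continuous_fst.tendsto ((0:ℝ), y₀)).eventually h0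
      filter_upwards [hev1, hev2] with q h1 h2
      rcases lt_trichotomy q.1 0 with hq | hq | hq
      · rw [persp_neg' hq]
        exact lt_of_lt_of_le hcx le_top
      · rw [persp_zero' hq]
        have h1' : (b:EReal) < φ (x + q.2) := by
          rw [hq] at h1
          simpa using h1
        have h3 : c < φ (x + q.2) - (ρ:EReal) :=
          ps_lt_sub_iff.mpr ((hb'1.trans hb'2).trans h1')
        have h4 := ps_le_recFn hx q.2
        rw [hρ] at h4
        exact lt_of_lt_of_le h3 h4
      · rw [persp_pos' hq]
        have hK := ps_K hbot hconv x ρ hρ q.2 hq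
        have h5 : ((1+q.1 : ℝ):EReal) * (b:EReal) ≤
            ((1+q.1 : ℝ):EReal) * φ ((1+q.1)⁻¹ • (x + q.2)) :=
          ps_mul_mono (by linarith) h1.le
        have habs : |q.1| ≤ (b-b')/(1+|b|) := h2.le.trans (min_le_right _ _)
        have h6 : b' ≤ (1+q.1)*b := by
          have h7 : |q.1 * b| ≤ ((b-b')/(1+|b|)) * |b| := by
            rw [abs_mul]
            exact mul_le_mul_of_nonneg_right habs (abs_nonneg b)
          have h8 : ((b-b')/(1+|b|)) * |b| ≤ b - b' := by
            rw [div_mul_eq_mul_div, div_le_iff₀ (by positivity)]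
            nlinarith [abs_nonneg b]
          have h9 := abs_le.mp (h7.trans h8)
          nlinarith [h9.1]
        have h9 : (b':EReal) ≤ (ρ:EReal) + (q.1:EReal) * φ (q.1⁻¹ • q.2) := by
          calc (b':EReal) ≤ (((1+q.1)*b : ℝ):EReal) := by exact_mod_cast h6
            _ = ((1+q.1:ℝ):EReal) * (b:EReal) := EReal.coe_mul _ _
            _ ≤ _ := h5.trans hK
        have h10 : c + (ρ:EReal) < (q.1:EReal) * φ (q.1⁻¹ • q.2) + (ρ:EReal) := by
          rw [add_comm ((ρ:EReal))] at h9
          exact lt_of_lt_of_le hb'1 h9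
        exact ps_add_coe_lt_iff.mp h10
    · -- η₀ > 0
      intro c hc
      rw [persp_pos hη₀] at hc
      obtain ⟨m, hm1, hm2⟩ := EReal.exists_between_coe_real hc
      obtain ⟨m', hm'1, hm'2⟩ := EReal.exists_between_coe_real hm1
      have hm'm : m' < m := by exact_mod_cast hm'2
      set b := m / η₀ with hbdef
      have hbφ : (b:EReal) < φ (η₀⁻¹ • y₀) := (ps_lt_mul_iff hη₀).mp hm2
      set δ := min (η₀/2) ((m - m')/(1+|b|)) with hδdef
      have hδpos : 0 < δ :=
        lt_min (by linarith) (div_pos (by linarith) (by positivity))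
      have hg : ContinuousAt (fun q : ℝ × G => q.1⁻¹ • q.2) (η₀, y₀) := by
        apply ContinuousAt.smul
        · exact continuousAt_fst.inv₀ hη₀.ne'
        · exact continuousAt_snd
      have hev1 : ∀ᶠ q : ℝ × G in nhds (η₀, y₀), (b:EReal) < φ (q.1⁻¹ • q.2) :=
        hg.eventually (hlsc (η₀⁻¹ • y₀) (b:EReal) hbφ)
      have hev2 : ∀ᶠ q : ℝ × G in nhds (η₀, y₀), |q.1 - η₀| < δ := by
        have h0 : ∀ᶠ s : ℝ in nhds η₀, |s - η₀| < δ := by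
          filter_upwards [Metric.ball_mem_nhds η₀ hδpos] with s hs
          simpa [Real.dist_eq] using hs
        exact (continuous_fst.tendsto (η₀, y₀)).eventually h0
      filter_upwards [hev1, hev2] with q h1 h2
      have hq1 : 0 < q.1 := by
        have h3 : |q.1 - η₀| < η₀/2 := lt_of_lt_of_le h2 (min_le_left _ _)
        rw [abs_lt] at h3
        linarith [h3.1]
      rw [persp_pos' hq1]
      have habs : |q.1 - η₀| ≤ (m - m')/(1+|b|) := h2.le.trans (min_le_right _ _)
      have h6 : m' ≤ q.1 * b := by
        have h7 : |(q.1 - η₀) * b| ≤ ((m-m')/(1+|b|)) * |b| := by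
          rw [abs_mul]
          exact mul_le_mul_of_nonneg_right habs (abs_nonneg b)
        have h8 : ((m-m')/(1+|b|)) * |b| ≤ m - m' := by
          rw [div_mul_eq_mul_div, div_le_iff₀ (by positivity)]
          nlinarith [abs_nonneg b]
        have h9 := abs_le.mp (h7.trans h8)
        have hηb : η₀ * b = m := by
          rw [hbdef]
          field_simp
        nlinarith [h9.1]
      calc c < (m' : EReal) := hm'1
        _ ≤ ((q.1 * b : ℝ) : EReal) := by exact_mod_cast h6
        _ = (q.1:EReal) * (b:EReal) := EReal.coe_mul _ _
        _ ≤ (q.1:EReal) * φ (q.1⁻¹ • q.2) := ps_mul_mono hq1.le h1.le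
  · -- convexity
    intro p q a b ha hb hab
    rcases eq_or_lt_of_le ha with rfl | ha'
    · have hb1 : b = 1 := by linarith
      subst hb1
      simp only [zero_smul, one_smul, zero_add, EReal.coe_zero, EReal.coe_one, zero_mul,
        one_mul]
      exact le_refl _
    rcases eq_or_lt_of_le hb with rfl | hb'
    · have ha1 : a = 1 := by linarith
      subst ha1
      simp only [zero_smul, one_smul, add_zero, EReal.coe_zero, EReal.coe_one, zero_mul,
        one_mul]
      exact le_refl _
    obtain ⟨η₁, y₁⟩ := p
    obtain ⟨η₂, y₂⟩ := q
    rcases lt_trichotomy η₁ 0 with h1 | h1 | h1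
    · rw [persp_neg h1, EReal.coe_mul_top_of_pos ha',
        EReal.top_add_of_ne_bot (ps_mul_ne_bot hb' (persp_ne_bot hbot hx₀ _))]
      exact le_top
    · rcases lt_trichotomy η₂ 0 with h2 | h2 | h2
      · rw [persp_neg h2, EReal.coe_mul_top_of_pos hb',
          EReal.add_top_of_ne_bot (ps_mul_ne_bot ha' (persp_ne_bot hbot hx₀ _))]
        exact le_top
      · subst h1; subst h2
        have hpt : a • ((0:ℝ), y₁) + b • ((0:ℝ), y₂) = ((0:ℝ), a • y₁ + b • y₂) := by
          simp [Prod.ext_iff, smul_eq_mul]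
        rw [hpt, persp_zero, persp_zero, persp_zero]
        exact ps_recFn_convex hbot hconv y₁ y₂ ha' hb' hab
      · subst h1
        exact ps_mixed hbot hconv y₁ h2 y₂ ha' hb' hx₀
    · rcases lt_trichotomy η₂ 0 with h2 | h2 | h2
      · rw [persp_neg h2, EReal.coe_mul_top_of_pos hb',
          EReal.add_top_of_ne_bot (ps_mul_ne_bot ha' (persp_ne_bot hbot hx₀ _))]
        exact le_top
      · subst h2
        rw [add_comm (a • (η₁, y₁)) (b • ((0:ℝ), y₂)),
          add_comm ((a:EReal) * persp φ (η₁, y₁)) ((b:EReal) * persp φ ((0:ℝ), y₂))]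
        exact ps_mixed hbot hconv y₂ h1 y₁ hb' ha' hx₀
      · exact ps_pospos hbot hconv h1 y₁ h2 y₂ ha' hb'


end
end

section
/- Let 𝒢 be a real Hilbert space, let φ ∈ Γ₀(𝒢), let C = {(μ, u) ∈ ℝ × 𝒢 : μ + φ*(u) ≤ 0}, let η ∈ ℝ, and let y ∈ 𝒢. Suppose that at least one of the following holds: (i) y is not in the barrier cone of dom φ*; (ii) dom φ* is open; (iii) dom φ* = 𝒢; (iv) φ is supercoercive, i.e., φ(y)/‖y‖ → +∞ as ‖y‖ → +∞; (v) for every v ∈ 𝒢 the function φ − ⟨·, v⟩ is coercive. Then the subdifferential of the perspective φ̃ at (η, y) is: {(φ(y/η) − ⟨y, u⟩/η, u) : u ∈ ∂φ(y/η)} if η > 0; C if η = 0 and y = 0; and the empty set in all other cases. -/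
open scoped RealInnerProductSpace Classical

noncomputable section

/-- The subdifferential of the perspective function, with respect to the inner
product `⟨(η,y),(μ,u)⟩ = ημ + ⟨y,u⟩` of the Hilbert direct sum `ℝ ⊕ 𝒢`. -/
def perspSubdiff {G : Type*} [NormedAddCommGroup G] [InnerProductSpace ℝ G]
    (f : G → EReal) (η : ℝ) (y : G) : Set (ℝ × G) :=
  {m | ∀ q : ℝ × G,
      (((q.1 - η) * m.1 + inner ℝ (q.2 - y) m.2 : ℝ) : EReal) + persp f (η, y) ≤ persp f q}

namespace PerspAux

variable {G : Type*} [NormedAddCommGroup G] [InnerProductSpace ℝ G]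

lemma eq_coe_of_ne (x : EReal) (h1 : x ≠ ⊤) (h2 : x ≠ ⊥) : ∃ a : ℝ, x = (a : EReal) :=
  ⟨x.toReal, (EReal.coe_toReal h1 h2).symm⟩

lemma nonpos_of_mul {A c : ℝ} (h : ∀ t : ℝ, 0 < t → t * A ≤ c) : A ≤ 0 := by
  by_contra hA
  push_neg at hA
  have h1 := h ((|c| + 1) / A) (by positivity)
  rw [div_mul_cancel₀ _ (ne_of_gt hA)] at h1
  nlinarith [le_abs_self c]

lemma nonneg_of_mul {A c : ℝ} (h : ∀ t : ℝ, 0 < t → t * A ≤ c) : 0 ≤ c := by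
  have hA : A ≤ 0 := nonpos_of_mul h
  by_contra hc
  push_neg at hc
  rcases eq_or_lt_of_le hA with hA0 | hA0
  · have := h 1 one_pos; rw [hA0] at this; linarith
  · have hA' : A ≠ 0 := ne_of_lt hA0
    have h2 := h (c / (2 * A)) (by rw [div_pos_iff]; right; constructor <;> linarith)
    have h3 : c / (2 * A) * A = c / 2 := by field_simp
    linarith

lemma ecoe_sub (a b : ℝ) : (a : EReal) - (b : EReal) = ((a - b : ℝ) : EReal) :=
  (EReal.coe_sub a b).symm

lemma le_of_forall_sub {c : ℝ} {x : EReal} (h : ∀ ε : ℝ, 0 < ε → ((c - ε : ℝ) : EReal) ≤ x) :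
    (c : EReal) ≤ x := by
  refine le_of_forall_lt fun d hd => ?_
  induction d with
  | bot => exact lt_of_lt_of_le (by exact_mod_cast EReal.bot_lt_coe (c-1)) (h 1 one_pos)
  | coe t =>
      have ht : t < c := EReal.coe_lt_coe_iff.mp hd
      have h2 := h ((c - t) / 2) (by linarith)
      refine lt_of_lt_of_le ?_ h2
      exact_mod_cast (by linarith : t < c - (c - t)/2)
  | top => exact absurd hd (not_lt.mpr le_top)


lemma conj_le_of_minorant (φ : G → EReal) (m1 : ℝ) (m2 : G)
    (hmin : ∀ x : G, ((m1 + inner ℝ x m2 : ℝ) : EReal) ≤ φ x) :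
    conjFn φ m2 ≤ ((-m1 : ℝ) : EReal) := by
  apply iSup_le
  intro x
  calc ((inner ℝ x m2 : ℝ) : EReal) - φ x
      ≤ ((inner ℝ x m2 : ℝ) : EReal) - ((m1 + inner ℝ x m2 : ℝ) : EReal) :=
        EReal.sub_le_sub le_rfl (hmin x)
    _ = ((-m1 : ℝ) : EReal) := by
        rw [ecoe_sub]; norm_num

lemma inner_le_recFn (φ : G → EReal) (hbot : ∀ x, φ x ≠ ⊥)
    {u : G} (hu : conjFn φ u ≠ ⊤) (hub : conjFn φ u ≠ ⊥) (w : G) :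
    ((inner ℝ w u : ℝ) : EReal) ≤ recFn φ w := by
  obtain ⟨s, hs⟩ := eq_coe_of_ne _ hu hub
  have FY : ∀ z : G, ((inner ℝ z u - s : ℝ) : EReal) ≤ φ z := by
    intro z
    have h1 : ((inner ℝ z u : ℝ) : EReal) - φ z ≤ (s : EReal) := by
      rw [← hs]; exact le_iSup (fun x : G => ((inner ℝ x u : ℝ) : EReal) - φ x) z
    rcases eq_or_ne (φ z) ⊤ with h | h
    · rw [h]; exact le_top
    obtain ⟨b, hb⟩ := eq_coe_of_ne _ h (hbot z)
    rw [hb] at h1 ⊢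
    rw [ecoe_sub, EReal.coe_le_coe_iff] at h1
    rw [EReal.coe_le_coe_iff]
    linarith
  apply le_of_forall_sub
  intro ε hε
  have hlt : ((s - ε : ℝ) : EReal) < conjFn φ u := by
    rw [hs]; exact_mod_cast sub_lt_self s hε
  rw [conjFn, lt_iSup_iff] at hlt
  obtain ⟨x, hx⟩ := hlt
  have hxt : φ x ≠ ⊤ := by
    intro h
    rw [h, EReal.sub_top] at hx
    exact absurd hx (not_lt.mpr bot_le)
  obtain ⟨b, hb⟩ := eq_coe_of_ne _ hxt (hbot x)
  rw [hb, ecoe_sub, EReal.coe_lt_coe_iff] at hx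
  have h2 : φ (x + w) - φ x ≤ recFn φ w :=
    le_iSup (fun p : {x : G // φ x ≠ ⊤} => φ ((p : G) + w) - φ (p : G)) ⟨x, hxt⟩
  refine le_trans ?_ h2
  rw [hb]
  have h3 := FY (x + w)
  calc ((inner ℝ w u - ε : ℝ) : EReal)
      ≤ ((inner ℝ (x + w) u - s - b : ℝ) : EReal) := by
        rw [EReal.coe_le_coe_iff, inner_add_left]
        linarith
    _ = ((inner ℝ (x + w) u - s : ℝ) : EReal) - (b : EReal) := by rw [ecoe_sub]
    _ ≤ φ (x + w) - (b : EReal) := EReal.sub_le_sub h3 le_rfl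

lemma conjFn_ne_bot (φ : G → EReal) (x₀ : G) (a₀ : ℝ) (ha₀ : φ x₀ = (a₀ : EReal)) (u : G) :
    conjFn φ u ≠ ⊥ := by
  intro h
  have h1 : ((inner ℝ x₀ u : ℝ) : EReal) - φ x₀ ≤ conjFn φ u :=
    le_iSup (fun x : G => ((inner ℝ x u : ℝ) : EReal) - φ x) x₀
  rw [h, le_bot_iff, ha₀, ecoe_sub] at h1
  exact EReal.coe_ne_bot _ h1

lemma conj_ne_top (φ : G → EReal) (hbot : ∀ x, φ x ≠ ⊥) (m1 : ℝ) (m2 : G)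
    (hmin : ∀ x : G, ((m1 + inner ℝ x m2 : ℝ) : EReal) ≤ φ x)
    (v : G) (ρ : ℝ) (hρ : ∀ z : G, ρ ≤ ‖z‖ → ((inner ℝ z v : ℝ) : EReal) ≤ φ z) :
    conjFn φ v ≠ ⊤ := by
  set M : ℝ := max 0 (|ρ| * ‖v‖ - m1 + |ρ| * ‖m2‖) with hM
  have hle : conjFn φ v ≤ (M : EReal) := by
    apply iSup_le
    intro x
    rcases le_or_gt ρ ‖x‖ with h | h
    · calc ((inner ℝ x v : ℝ) : EReal) - φ x
          ≤ ((inner ℝ x v : ℝ) : EReal) - ((inner ℝ x v : ℝ) : EReal) :=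
            EReal.sub_le_sub le_rfl (hρ x h)
        _ = ((0 : ℝ) : EReal) := by rw [ecoe_sub]; norm_num
        _ ≤ (M : EReal) := by rw [EReal.coe_le_coe_iff]; exact le_max_left _ _
    · calc ((inner ℝ x v : ℝ) : EReal) - φ x
          ≤ ((inner ℝ x v : ℝ) : EReal) - ((m1 + inner ℝ x m2 : ℝ) : EReal) :=
            EReal.sub_le_sub le_rfl (hmin x)
        _ = ((inner ℝ x v - (m1 + inner ℝ x m2) : ℝ) : EReal) := by rw [ecoe_sub]
        _ ≤ (M : EReal) := by
            rw [EReal.coe_le_coe_iff]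
            have hx : ‖x‖ ≤ |ρ| := le_trans h.le (le_abs_self ρ)
            have i1 := real_inner_le_norm x v
            have i2 := abs_real_inner_le_norm x m2
            have i3 := neg_abs_le (inner ℝ x m2 : ℝ)
            have h4 : ‖x‖ * ‖v‖ ≤ |ρ| * ‖v‖ :=
              mul_le_mul_of_nonneg_right hx (norm_nonneg v)
            have h5 : ‖x‖ * ‖m2‖ ≤ |ρ| * ‖m2‖ :=
              mul_le_mul_of_nonneg_right hx (norm_nonneg m2)
            have := le_max_right 0 (|ρ| * ‖v‖ - m1 + |ρ| * ‖m2‖)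
            rw [hM]
            nlinarith [abs_nonneg (inner ℝ x m2 : ℝ)]
  intro h
  rw [h, top_le_iff] at hle
  exact EReal.coe_ne_top _ hle

omit [InnerProductSpace ℝ G] in
lemma exists_rho {P : G → Prop} (h : {z : G | P z} ∈ Filter.comap (fun z : G => ‖z‖) Filter.atTop) :
    ∃ ρ : ℝ, ∀ z : G, ρ ≤ ‖z‖ → P z := by
  obtain ⟨s, hs, hsub⟩ := h
  obtain ⟨ρ, hρ⟩ := Filter.mem_atTop_sets.mp hs
  exact ⟨ρ, fun z hz => hsub (hρ _ hz)⟩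

end PerspAux

open PerspAux in
/-- refined formula for the subdifferential of the perspective
function under any one of the conditions (i)–(v). -/
theorem perspective_subdifferential_refined
    {G : Type*} [NormedAddCommGroup G] [InnerProductSpace ℝ G] [CompleteSpace G]
    (φ : G → EReal) (hφ : Gamma0 G φ)
    (C : Set (ℝ × G)) (hC : C = {m : ℝ × G | (m.1 : EReal) + conjFn φ m.2 ≤ 0})
    (η : ℝ) (y : G)
    (hyp :
      -- (i) y is not in the barrier cone of dom φ*
      (suppFn {u : G | conjFn φ u ≠ ⊤} y = ⊤) ∨
      -- (ii) dom φ* is open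
      IsOpen {u : G | conjFn φ u ≠ ⊤} ∨
      -- (iii) dom φ* = 𝒢
      {u : G | conjFn φ u ≠ ⊤} = Set.univ ∨
      -- (iv) φ is supercoercive: φ(z)/‖z‖ → +∞ as ‖z‖ → +∞
      Filter.Tendsto (fun z : G => φ z / ((‖z‖ : ℝ) : EReal))
        (Filter.comap (fun z : G => ‖z‖) Filter.atTop) Filter.atTop ∨
      -- (v) for every v, φ − ⟨·, v⟩ is coercive
      (∀ v : G, Filter.Tendsto (fun z : G => φ z - ((inner ℝ z v : ℝ) : EReal))
        (Filter.comap (fun z : G => ‖z‖) Filter.atTop) Filter.atTop)) :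
    (0 < η → perspSubdiff φ η y =
        {m : ℝ × G | m.2 ∈ subdiff φ (η⁻¹ • y) ∧
          (m.1 : EReal) = φ (η⁻¹ • y) - (((inner ℝ y m.2 : ℝ) / η : ℝ) : EReal)}) ∧
    (η = 0 → y = 0 → perspSubdiff φ η y = C) ∧
    (¬ 0 < η → ¬ (η = 0 ∧ y = 0) → perspSubdiff φ η y = ∅) := by

  obtain ⟨⟨hbot, x₀, hx₀top⟩, hlsc, hcvx⟩ := hφ
  obtain ⟨a₀, ha₀⟩ := eq_coe_of_ne (φ x₀) hx₀top (hbot x₀)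
  have ppos : ∀ (t : ℝ) (z : G), 0 < t → persp φ (t, t • z) = (t : EReal) * φ z := by
    intro t z ht
    show (if 0 < t then (t : EReal) * φ (t⁻¹ • t • z) else _) = _
    rw [if_pos ht, smul_smul, inv_mul_cancel₀ (ne_of_gt ht), one_smul]
  have pzero : ∀ z : G, persp φ (0, z) = recFn φ z := by
    intro z
    show (if (0:ℝ) < 0 then _ else if (0:ℝ) = 0 then recFn φ z else _) = _
    rw [if_neg (lt_irrefl _), if_pos rfl]
  refine ⟨?_, ?_, ?_⟩
  · -- Part 1 : η > 0
    intro hη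
    have hη0 : η ≠ 0 := ne_of_gt hη
    have hySmul : η • (η⁻¹ • y) = y := by
      rw [smul_smul, mul_inv_cancel₀ hη0, one_smul]
    have hpersp : persp φ (η, y) = (η : EReal) * φ (η⁻¹ • y) := by
      show (if 0 < η then (η : EReal) * φ (η⁻¹ • y) else _) = _
      rw [if_pos hη]
    ext m
    obtain ⟨m1, m2⟩ := m
    simp only [Set.mem_setOf_eq]
    constructor
    · intro hm
      have key : ∀ (t : ℝ) (z : G), 0 < t →
          (((t - η) * m1 + inner ℝ (t • z - y) m2 : ℝ) : EReal) + persp φ (η, y)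
            ≤ (t : EReal) * φ z := by
        intro t z ht
        have h1 := hm (t, t • z)
        rwa [ppos t z ht] at h1
      have hxt : φ (η⁻¹ • y) ≠ ⊤ := by
        intro h
        have h1 := key η x₀ hη
        rw [hpersp, h, EReal.mul_top_of_pos (by exact_mod_cast hη),
          EReal.coe_add_top, top_le_iff, ha₀, ← EReal.coe_mul] at h1
        exact EReal.coe_ne_top _ h1
      obtain ⟨a, ha⟩ := eq_coe_of_ne _ hxt (hbot _)
      have keyR : ∀ (t : ℝ) (z : G) (b : ℝ), 0 < t → φ z = (b : EReal) →
          (t - η) * m1 + inner ℝ (t • z - y) m2 + η * a ≤ t * b := by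
        intro t z b ht hb
        have h1 := key t z ht
        rw [hpersp, ha, hb, ← EReal.coe_mul, ← EReal.coe_mul, ← EReal.coe_add,
          EReal.coe_le_coe_iff] at h1
        exact h1
      have hsub : m2 ∈ subdiff φ (η⁻¹ • y) := by
        intro z
        rcases eq_or_ne (φ z) ⊤ with hz | hz
        · rw [hz]; exact le_top
        obtain ⟨b, hb⟩ := eq_coe_of_ne _ hz (hbot z)
        rw [ha, hb, ← EReal.coe_add, EReal.coe_le_coe_iff]
        have h1 := keyR η z b hη hb
        have h2 : η • z - y = η • (z - η⁻¹ • y) := by rw [smul_sub, hySmul]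
        rw [h2, real_inner_smul_left] at h1
        nlinarith [h1, hη]
      refine ⟨hsub, ?_⟩
      have e : ∀ t : ℝ, inner ℝ (t • (η⁻¹ • y) - y) m2 = (t / η - 1) * (inner ℝ y m2 : ℝ) := by
        intro t
        have h2 : t • (η⁻¹ • y) - y = (t / η - 1) • y := by
          rw [smul_smul, sub_smul, one_smul, div_eq_mul_inv]
        rw [h2, real_inner_smul_left]
      have h1 := keyR (2 * η) (η⁻¹ • y) a (by linarith) ha
      have h2 := keyR (η / 2) (η⁻¹ • y) a (by linarith) ha
      rw [e] at h1 h2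
      have hm1 : m1 = a - inner ℝ y m2 / η := by
        have e1 : 2 * η / η - 1 = 1 := by field_simp; ring
        have e2 : η / 2 / η - 1 = -1 / 2 := by field_simp; ring
        rw [e1] at h1
        rw [e2] at h2
        have g1 : η * m1 + inner ℝ y m2 ≤ η * a := by linarith [h1]
        have g2 : η * a ≤ η * m1 + inner ℝ y m2 := by linarith [h2]
        field_simp
        linarith [g1, g2]
      rw [ha, hm1, ecoe_sub]
    · rintro ⟨hsub, hm1E⟩
      have hxt : φ (η⁻¹ • y) ≠ ⊤ := by
        intro h
        have h1 := hsub x₀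
        rw [h, EReal.coe_add_top, top_le_iff, ha₀] at h1
        exact EReal.coe_ne_top _ h1
      obtain ⟨a, ha⟩ := eq_coe_of_ne _ hxt (hbot _)
      rw [ha, ecoe_sub] at hm1E
      have hm1 : m1 = a - inner ℝ y m2 / η := by exact_mod_cast hm1E
      have hsubR : ∀ z : G, ((inner ℝ (z - η⁻¹ • y) m2 + a : ℝ) : EReal) ≤ φ z := by
        intro z
        have h1 := hsub z
        rwa [ha, ← EReal.coe_add] at h1
      intro q
      obtain ⟨q1, q2⟩ := q
      rcases lt_trichotomy 0 q1 with hq1 | hq1 | hq1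
      · -- q1 > 0
        have hq : persp φ (q1, q2) = (q1 : EReal) * φ (q1⁻¹ • q2) := by
          show (if 0 < q1 then _ else _) = _
          rw [if_pos hq1]
        rcases eq_or_ne (φ (q1⁻¹ • q2)) ⊤ with hz | hz
        · rw [hq, hz, EReal.mul_top_of_pos (by exact_mod_cast hq1)]
          exact le_top
        obtain ⟨b, hb⟩ := eq_coe_of_ne _ hz (hbot _)
        have h5 : inner ℝ (q1⁻¹ • q2 - η⁻¹ • y) m2 + a ≤ b := by
          have h1 := hsubR (q1⁻¹ • q2)
          rw [hb, EReal.coe_le_coe_iff] at h1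
          exact h1
        rw [inner_sub_left, real_inner_smul_left, real_inner_smul_left] at h5
        have h6 : q1 * (q1⁻¹ * inner ℝ q2 m2 - η⁻¹ * inner ℝ y m2 + a) ≤ q1 * b := by
          nlinarith [h5, hq1]
        rw [hq, hb, hpersp, ha, ← EReal.coe_mul, ← EReal.coe_mul, ← EReal.coe_add,
          EReal.coe_le_coe_iff]
        rw [inner_sub_left, hm1]
        have e3 : q1 * (q1⁻¹ * inner ℝ q2 m2 - η⁻¹ * inner ℝ y m2 + a)
            = inner ℝ q2 m2 - q1 * (inner ℝ y m2 / η) + q1 * a := by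
          field_simp
        rw [e3] at h6
        have e4 : (q1 - η) * (a - inner ℝ y m2 / η) + ((inner ℝ q2 m2 : ℝ) - inner ℝ y m2) + η * a
            = inner ℝ q2 m2 - q1 * (inner ℝ y m2 / η) + q1 * a := by
          field_simp
          ring
        linarith [h6, e4.le]
      · -- q1 = 0
        subst hq1
        rw [pzero, hpersp, ha, ← EReal.coe_mul, ← EReal.coe_add]
        have h7 : ((inner ℝ q2 m2 + a : ℝ) : EReal) ≤ φ (η⁻¹ • y + q2) := by
          have h1 := hsubR (η⁻¹ • y + q2)
          rwa [add_sub_cancel_left] at h1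
        have h8 : ((inner ℝ q2 m2 : ℝ) : EReal) ≤ φ (η⁻¹ • y + q2) - φ (η⁻¹ • y) := by
          rw [ha]
          calc ((inner ℝ q2 m2 : ℝ) : EReal)
              = ((inner ℝ q2 m2 + a : ℝ) : EReal) - (a : EReal) := by
                rw [ecoe_sub]; norm_num
            _ ≤ φ (η⁻¹ • y + q2) - (a : EReal) := EReal.sub_le_sub h7 le_rfl
        have h9 : φ (η⁻¹ • y + q2) - φ (η⁻¹ • y) ≤ recFn φ q2 :=
          le_iSup (fun p : {x : G // φ x ≠ ⊤} => φ ((p : G) + q2) - φ (p : G)) ⟨_, hxt⟩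
        refine le_trans ?_ (le_trans h8 h9)
        rw [EReal.coe_le_coe_iff, inner_sub_left, hm1]
        have : (0 - η) * (a - inner ℝ y m2 / η) + ((inner ℝ q2 m2 : ℝ) - inner ℝ y m2) + η * a
            = inner ℝ q2 m2 := by
          field_simp
          ring
        linarith [this.le]
      · -- q1 < 0
        have hq : persp φ (q1, q2) = ⊤ := by
          show (if 0 < q1 then _ else if q1 = 0 then _ else ⊤) = ⊤
          rw [if_neg (by linarith), if_neg (ne_of_lt hq1)]
        rw [hq]; exact le_top
  · -- Part 2 : η = 0, y = 0
    intro hη0 hy0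
    subst hη0
    subst hy0
    rw [hC]
    have hrec0 : recFn φ (0 : G) = 0 := by
      apply le_antisymm
      · apply iSup_le
        rintro ⟨x, hx⟩
        obtain ⟨b, hb⟩ := eq_coe_of_ne _ hx (hbot x)
        simp only [add_zero, hb, ecoe_sub, sub_self, EReal.coe_zero, le_refl]
      · have h1 : φ (x₀ + 0) - φ x₀ ≤ recFn φ (0 : G) :=
          le_iSup (fun p : {x : G // φ x ≠ ⊤} => φ ((p : G) + 0) - φ (p : G)) ⟨x₀, hx₀top⟩
        rwa [add_zero, ha₀, ecoe_sub, sub_self, EReal.coe_zero] at h1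
    ext m
    obtain ⟨m1, m2⟩ := m
    simp only [Set.mem_setOf_eq]
    have hCiff : ((m1 : ℝ) : EReal) + conjFn φ m2 ≤ 0 ↔
        ∀ x : G, ((m1 + inner ℝ x m2 : ℝ) : EReal) ≤ φ x := by
      constructor
      · intro h x
        have h1 : ((inner ℝ x m2 : ℝ) : EReal) - φ x ≤ conjFn φ m2 :=
          le_iSup (fun z : G => ((inner ℝ z m2 : ℝ) : EReal) - φ z) x
        rcases eq_or_ne (φ x) ⊤ with hx | hx
        · rw [hx]; exact le_top
        obtain ⟨b, hb⟩ := eq_coe_of_ne _ hx (hbot x)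
        rw [hb] at h1 ⊢
        rw [ecoe_sub] at h1
        have h2 : ((m1 : ℝ) : EReal) + ((inner ℝ x m2 - b : ℝ) : EReal) ≤ 0 :=
          le_trans (add_le_add le_rfl h1) h
        rw [← EReal.coe_add] at h2
        have h3 : m1 + (inner ℝ x m2 - b) ≤ 0 := by exact_mod_cast h2
        rw [EReal.coe_le_coe_iff]
        linarith
      · intro h
        have h1 : conjFn φ m2 ≤ ((-m1 : ℝ) : EReal) := conj_le_of_minorant φ m1 m2 h
        calc ((m1 : ℝ) : EReal) + conjFn φ m2 ≤ (m1 : EReal) + ((-m1 : ℝ) : EReal) :=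
              add_le_add le_rfl h1
          _ = 0 := by rw [← EReal.coe_add]; norm_num
    rw [hCiff]
    constructor
    · intro hm x
      have h2 := hm (1, (1:ℝ) • x)
      rw [ppos 1 x one_pos, pzero, hrec0, add_zero] at h2
      rcases eq_or_ne (φ x) ⊤ with hx | hx
      · rw [hx]; exact le_top
      obtain ⟨b, hb⟩ := eq_coe_of_ne _ hx (hbot x)
      rw [hb, ← EReal.coe_mul, EReal.coe_le_coe_iff] at h2
      rw [hb, EReal.coe_le_coe_iff]
      simp only [sub_zero, one_smul, one_mul] at h2
      linarith [h2]
    · intro hmem q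
      obtain ⟨q1, q2⟩ := q
      have hm2top : conjFn φ m2 ≠ ⊤ := by
        intro h
        have h1 := conj_le_of_minorant φ m1 m2 hmem
        rw [h, top_le_iff] at h1
        exact EReal.coe_ne_top _ h1
      rw [pzero, hrec0, add_zero]
      simp only [sub_zero]
      rcases lt_trichotomy 0 q1 with hq1 | hq1 | hq1
      · have hq : persp φ (q1, q2) = (q1 : EReal) * φ (q1⁻¹ • q2) := by
          show (if 0 < q1 then _ else _) = _
          rw [if_pos hq1]
        rcases eq_or_ne (φ (q1⁻¹ • q2)) ⊤ with hz | hz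
        · rw [hq, hz, EReal.mul_top_of_pos (by exact_mod_cast hq1)]
          exact le_top
        obtain ⟨b, hb⟩ := eq_coe_of_ne _ hz (hbot _)
        have h1 := hmem (q1⁻¹ • q2)
        rw [hb, EReal.coe_le_coe_iff, real_inner_smul_left] at h1
        rw [hq, hb, ← EReal.coe_mul, EReal.coe_le_coe_iff]
        have h6 : q1 * (m1 + q1⁻¹ * inner ℝ q2 m2) ≤ q1 * b := by nlinarith [h1, hq1]
        have e3 : q1 * (m1 + q1⁻¹ * inner ℝ q2 m2) = q1 * m1 + inner ℝ q2 m2 := by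
          field_simp
        linarith [e3.symm.le, h6]
      · subst hq1
        rw [pzero]
        simp only [zero_mul, zero_add]
        exact inner_le_recFn φ hbot hm2top (conjFn_ne_bot φ x₀ a₀ ha₀ m2) q2
      · have hq : persp φ (q1, q2) = ⊤ := by
          show (if 0 < q1 then _ else if q1 = 0 then _ else ⊤) = ⊤
          rw [if_neg (by linarith), if_neg (ne_of_lt hq1)]
        rw [hq]; exact le_top
  · -- Part 3
    intro hηpos hne
    have hη : η ≤ 0 := not_lt.mp hηpos
    ext m
    obtain ⟨m1, m2⟩ := m
    simp only [Set.mem_empty_iff_false, iff_false]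
    intro hm
    rcases lt_or_eq_of_le hη with hηneg | hηzero
    · -- η < 0
      have hp : persp φ (η, y) = ⊤ := by
        show (if 0 < η then _ else if η = 0 then _ else ⊤) = ⊤
        rw [if_neg hηpos, if_neg (ne_of_lt hηneg)]
      have h1 := hm (1, (1:ℝ) • x₀)
      rw [hp, ppos 1 x₀ one_pos, ha₀, ← EReal.coe_mul, EReal.coe_add_top, top_le_iff] at h1
      exact EReal.coe_ne_top _ h1
    · -- η = 0, y ≠ 0
      subst hηzero
      have hy : y ≠ 0 := fun h => hne ⟨rfl, h⟩
      have hrt : recFn φ y ≠ ⊤ := by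
        intro h
        have h1 := hm (1, (1:ℝ) • x₀)
        rw [pzero, h, ppos 1 x₀ one_pos, ha₀, ← EReal.coe_mul, EReal.coe_add_top, top_le_iff] at h1
        exact EReal.coe_ne_top _ h1
      have hrb : recFn φ y ≠ ⊥ := by
        intro h
        have h1 : φ (x₀ + y) - φ x₀ ≤ recFn φ y :=
          le_iSup (fun p : {x : G // φ x ≠ ⊤} => φ ((p : G) + y) - φ (p : G)) ⟨x₀, hx₀top⟩
        rw [h, le_bot_iff, ha₀] at h1
        rcases eq_or_ne (φ (x₀ + y)) ⊤ with h2 | h2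
        · rw [h2, EReal.top_sub_coe] at h1
          exact (by simp : (⊤ : EReal) ≠ ⊥) h1
        · obtain ⟨b, hb⟩ := eq_coe_of_ne _ h2 (hbot _)
          rw [hb, ecoe_sub] at h1
          exact EReal.coe_ne_bot _ h1
      obtain ⟨r, hr⟩ := eq_coe_of_ne _ hrt hrb
      have keyR : ∀ (t : ℝ) (z : G) (b : ℝ), 0 < t → φ z = (b : EReal) →
          t * m1 + (t * inner ℝ z m2 - inner ℝ y m2) + r ≤ t * b := by
        intro t z b ht hb
        have h1 := hm (t, t • z)
        rw [pzero, hr, ppos t z ht, hb, ← EReal.coe_mul, ← EReal.coe_add,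
          EReal.coe_le_coe_iff, sub_zero] at h1
        rw [inner_sub_left, real_inner_smul_left] at h1
        linarith [h1]
      have hmin : ∀ x : G, ((m1 + inner ℝ x m2 : ℝ) : EReal) ≤ φ x := by
        intro x
        rcases eq_or_ne (φ x) ⊤ with hx | hx
        · rw [hx]; exact le_top
        obtain ⟨b, hb⟩ := eq_coe_of_ne _ hx (hbot x)
        rw [hb, EReal.coe_le_coe_iff]
        have hA : m1 + inner ℝ x m2 - b ≤ 0 := by
          apply nonpos_of_mul (c := inner ℝ y m2 - r)
          intro t ht
          have := keyR t x b ht hb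
          nlinarith [this]
        linarith
      have hc0 : 0 ≤ (inner ℝ y m2 : ℝ) - r := by
        apply nonneg_of_mul (A := m1 + inner ℝ x₀ m2 - a₀)
        intro t ht
        have := keyR t x₀ a₀ ht ha₀
        nlinarith [this]
      have hm2top : conjFn φ m2 ≠ ⊤ := by
        intro h
        have h1 := conj_le_of_minorant φ m1 m2 hmin
        rw [h, top_le_iff] at h1
        exact EReal.coe_ne_top _ h1
      -- final: find ε > 0 with conjFn φ (m2 + ε • y) ≠ ⊤
      have final : ∀ ε : ℝ, 0 < ε → conjFn φ (m2 + ε • y) ≠ ⊤ → False := by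
        intro ε hε hconj
        have h1 := inner_le_recFn φ hbot hconj (conjFn_ne_bot φ x₀ a₀ ha₀ _) y
        rw [hr, EReal.coe_le_coe_iff, inner_add_right, real_inner_smul_right,
          real_inner_self_eq_norm_sq] at h1
        have hny : 0 < ‖y‖ := norm_pos_iff.mpr hy
        have hpos : 0 < ε * ‖y‖ ^ 2 := mul_pos hε (pow_pos hny 2)
        linarith [h1, hc0, hpos]
      rcases hyp with hi | hii | hiii | hiv | hv
      · -- (i)
        have h1 : suppFn {u : G | conjFn φ u ≠ ⊤} y ≤ (r : EReal) := by
          apply iSup_le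
          intro u
          apply iSup_le
          intro hu
          have := inner_le_recFn φ hbot hu (conjFn_ne_bot φ x₀ a₀ ha₀ u) y
          rwa [hr] at this
        rw [hi, top_le_iff] at h1
        exact EReal.coe_ne_top _ h1
      · -- (ii) open
        obtain ⟨δ, hδ, hball⟩ := Metric.isOpen_iff.mp hii m2 hm2top
        set ε : ℝ := δ / (2 * (‖y‖ + 1)) with hε
        have hεpos : 0 < ε := by
          apply div_pos hδ
          positivity
        refine final ε hεpos ?_
        apply hball
        rw [Metric.mem_ball, dist_eq_norm]
        have : ‖m2 + ε • y - m2‖ = ε * ‖y‖ := by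
          rw [add_sub_cancel_left, norm_smul, Real.norm_eq_abs, abs_of_pos hεpos]
        rw [this]
        have hy1 : ‖y‖ < ‖y‖ + 1 := by linarith
        calc ε * ‖y‖ ≤ ε * (‖y‖ + 1) := by nlinarith [hεpos]
          _ = δ / 2 := by rw [hε]; field_simp
          _ < δ := by linarith
      · -- (iii) univ
        refine final 1 one_pos ?_
        have : m2 + (1:ℝ) • y ∈ {u : G | conjFn φ u ≠ ⊤} := by
          rw [hiii]; trivial
        exact this
      · -- (iv) supercoercive
        set v : G := m2 + (1:ℝ) • y with hv'
        have hev : {z : G | ((‖v‖ : ℝ) : EReal) ≤ φ z / ((‖z‖ : ℝ) : EReal)}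
            ∈ Filter.comap (fun z : G => ‖z‖) Filter.atTop :=
          hiv.eventually (Filter.eventually_ge_atTop _)
        obtain ⟨ρ, hρ⟩ := exists_rho hev
        refine final 1 one_pos ?_
        apply conj_ne_top φ hbot m1 m2 hmin v (max ρ 1)
        intro z hz
        have hz1 : (1:ℝ) ≤ ‖z‖ := le_trans (le_max_right ρ 1) hz
        have hzρ : ρ ≤ ‖z‖ := le_trans (le_max_left ρ 1) hz
        have h1 := hρ z hzρ
        have hzpos : (0 : EReal) < ((‖z‖ : ℝ) : EReal) := by exact_mod_cast (by linarith : (0:ℝ) < ‖z‖)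
        rw [EReal.le_div_iff_mul_le hzpos (EReal.coe_ne_top _), ← EReal.coe_mul] at h1
        refine le_trans ?_ h1
        rw [EReal.coe_le_coe_iff]
        calc (inner ℝ z v : ℝ) ≤ ‖z‖ * ‖v‖ := real_inner_le_norm z v
          _ = ‖v‖ * ‖z‖ := mul_comm _ _
      · -- (v)
        set v : G := m2 + (1:ℝ) • y with hv'
        have hev : {z : G | (0 : EReal) ≤ φ z - ((inner ℝ z v : ℝ) : EReal)}
            ∈ Filter.comap (fun z : G => ‖z‖) Filter.atTop :=
          (hv v).eventually (Filter.eventually_ge_atTop _)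
        obtain ⟨ρ, hρ⟩ := exists_rho hev
        refine final 1 one_pos ?_
        apply conj_ne_top φ hbot m1 m2 hmin v ρ
        intro z hz
        have h1 := hρ z hz
        have h2 := (EReal.le_sub_iff_add_le (Or.inl (EReal.coe_ne_bot _))
          (Or.inl (EReal.coe_ne_top _))).mp h1
        rwa [zero_add] at h2


end
end

section
/- Let 𝒢 be a real Hilbert space with 𝒢 ≠ {0} and let p ∈ (1, +∞). Define g : ℝ × 𝒢 → (-∞, +∞] by g(η, y) = ‖y‖^p / η^{p−1} if η > 0; g(0, 0) = 0; g(η, y) = +∞ otherwise. Then g is a proper lower semicontinuous convex function on ℝ ⊕ 𝒢, but the restriction of g to its domain is not continuous at (0, 0): the sequence y_n = (α_n^{p/(p−1)}, α_n v) with ‖v‖ = 1 and α_n ↓ 0 lies in dom g, converges to (0,0), and satisfies g(y_n) → 1 ≠ 0 = g(0,0). -/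
open scoped RealInnerProductSpace Classical

noncomputable section

private lemma persp_scalar' {p : ℝ} (hp : 1 < p) {a b η₁ η₂ t₁ t₂ : ℝ}
    (ha : 0 ≤ a) (hb : 0 ≤ b) (hab : a + b = 1)
    (hη₁ : 0 < η₁) (hη₂ : 0 < η₂) (ht₁ : 0 ≤ t₁) (ht₂ : 0 ≤ t₂) :
    (a*t₁ + b*t₂) ^ p / (a*η₁ + b*η₂) ^ (p-1) ≤
      a * (t₁ ^ p / η₁ ^ (p-1)) + b * (t₂ ^ p / η₂ ^ (p-1)) := by
  have hS : 0 < a*η₁ + b*η₂ := by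
    rcases ha.lt_or_eq with h|h
    · nlinarith [mul_pos h hη₁, mul_nonneg hb hη₂.le]
    · have hb1 : b = 1 := by linarith
      rw [← h, hb1]; simpa using hη₂
  set S := a*η₁ + b*η₂ with hSdef
  have hlm : a*η₁/S + b*η₂/S = 1 := by field_simp; exact hSdef.symm
  have hjen := (convexOn_rpow hp.le).2 (Set.mem_Ici.2 (div_nonneg ht₁ hη₁.le))
      (Set.mem_Ici.2 (div_nonneg ht₂ hη₂.le))
      (div_nonneg (mul_nonneg ha hη₁.le) hS.le)
      (div_nonneg (mul_nonneg hb hη₂.le) hS.le) hlm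
  simp only [smul_eq_mul] at hjen
  have hrw : a*η₁/S * (t₁/η₁) + b*η₂/S * (t₂/η₂) = (a*t₁+b*t₂)/S := by
    field_simp
  rw [hrw] at hjen
  have hmul := mul_le_mul_of_nonneg_left hjen hS.le
  have hSp : S ^ p = S ^ (p-1) * S := by
    rw [← Real.rpow_add_one hS.ne' (p-1)]; ring_nf
  have hS1 : (0:ℝ) < S ^ (p-1) := Real.rpow_pos_of_pos hS _
  have h1 : S * ((a*t₁+b*t₂)/S)^p = (a*t₁+b*t₂)^p / S^(p-1) := by
    rw [Real.div_rpow (by positivity) hS.le, hSp]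
    field_simp
  have hη₁p : η₁ ^ p = η₁ ^ (p-1) * η₁ := by
    rw [← Real.rpow_add_one hη₁.ne' (p-1)]; ring_nf
  have hη₂p : η₂ ^ p = η₂ ^ (p-1) * η₂ := by
    rw [← Real.rpow_add_one hη₂.ne' (p-1)]; ring_nf
  have h2 : S * (a*η₁/S * (t₁/η₁)^p + b*η₂/S * (t₂/η₂)^p)
      = a * (t₁ ^ p / η₁ ^ (p-1)) + b * (t₂ ^ p / η₂ ^ (p-1)) := by
    rw [Real.div_rpow ht₁ hη₁.le, Real.div_rpow ht₂ hη₂.le, hη₁p, hη₂p]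
    have := (Real.rpow_pos_of_pos hη₁ (p-1)).ne'
    have := (Real.rpow_pos_of_pos hη₂ (p-1)).ne'
    field_simp
  rw [h1, h2] at hmul
  exact hmul

private lemma persp_vec' {G : Type*} [SeminormedAddCommGroup G] [NormedSpace ℝ G]
    {p : ℝ} (hp : 1 < p) {a b η₁ η₂ : ℝ} {y₁ y₂ : G}
    (ha : 0 ≤ a) (hb : 0 ≤ b) (hab : a + b = 1) (hη₁ : 0 < η₁) (hη₂ : 0 < η₂) :
    ‖a • y₁ + b • y₂‖ ^ p / (a*η₁ + b*η₂) ^ (p-1) ≤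
      a * (‖y₁‖ ^ p / η₁ ^ (p-1)) + b * (‖y₂‖ ^ p / η₂ ^ (p-1)) := by
  have hS : 0 < a*η₁ + b*η₂ := by
    rcases ha.lt_or_eq with h|h
    · nlinarith [mul_pos h hη₁, mul_nonneg hb hη₂.le]
    · have hb1 : b = 1 := by linarith
      rw [← h, hb1]; simpa using hη₂
  have htri : ‖a • y₁ + b • y₂‖ ≤ a*‖y₁‖ + b*‖y₂‖ := by
    calc ‖a • y₁ + b • y₂‖ ≤ ‖a • y₁‖ + ‖b • y₂‖ := norm_add_le _ _
    _ = a*‖y₁‖ + b*‖y₂‖ := by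
        rw [norm_smul, norm_smul, Real.norm_of_nonneg ha, Real.norm_of_nonneg hb]
  have h1 : ‖a • y₁ + b • y₂‖ ^ p ≤ (a*‖y₁‖ + b*‖y₂‖) ^ p :=
    Real.rpow_le_rpow (norm_nonneg _) htri (by linarith)
  calc ‖a • y₁ + b • y₂‖ ^ p / (a*η₁ + b*η₂) ^ (p-1)
      ≤ (a*‖y₁‖ + b*‖y₂‖) ^ p / (a*η₁ + b*η₂) ^ (p-1) := by gcongr
    _ ≤ _ := persp_scalar' hp ha hb hab hη₁ hη₂ (norm_nonneg _) (norm_nonneg _)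

/-- for `p ∈ (1,∞)`, the function `g(η,y) = ‖y‖^p/η^{p-1}` (for
`η > 0`, with `g(0,0) = 0` and `+∞` elsewhere) is in `Γ₀(ℝ ⊕ 𝒢)` but its
restriction to its domain is discontinuous at `(0,0)`. -/
theorem perspective_power_discontinuous_on_domain
    {G : Type*} [NormedAddCommGroup G] [InnerProductSpace ℝ G] [CompleteSpace G]
    [Nontrivial G]
    (p : ℝ) (hp : 1 < p)
    (g : ℝ × G → EReal)
    (hg : g = fun z =>
      if 0 < z.1 then ((‖z.2‖ ^ p / z.1 ^ (p - 1) : ℝ) : EReal)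
      else if z.1 = 0 ∧ z.2 = 0 then 0
      else ⊤) :
    Gamma0 (ℝ × G) g ∧
    g (0, (0 : G)) = 0 ∧
    ∀ v : G, ‖v‖ = 1 →
      ∀ α : ℕ → ℝ, (∀ n, 0 < α n) → Antitone α →
        Filter.Tendsto α Filter.atTop (nhds 0) →
        (∀ n, g (α n ^ (p / (p - 1)), α n • v) ≠ ⊤) ∧
        Filter.Tendsto (fun n => ((α n ^ (p / (p - 1)) : ℝ), α n • v))
          Filter.atTop (nhds ((0 : ℝ), (0 : G))) ∧
        Filter.Tendsto (fun n => g (α n ^ (p / (p - 1)), α n • v))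
          Filter.atTop (nhds (1 : EReal)) := by
  have hp0 : (0:ℝ) < p - 1 := by linarith
  have hp0' : p - 1 ≠ 0 := hp0.ne'
  have hval : ∀ (η : ℝ) (y : G), 0 < η → g (η, y) = ((‖y‖ ^ p / η ^ (p-1) : ℝ) : EReal) := by
    intro η y hη; simp only [hg]; rw [if_pos hη]
  have hzero : g (0, (0:G)) = 0 := by
    simp only [hg]; norm_num
  have htop : ∀ (η : ℝ) (y : G), ¬ 0 < η → ¬ (η = 0 ∧ y = 0) → g (η, y) = ⊤ := by
    intro η y h1 h2; simp only [hg]; rw [if_neg h1, if_neg h2]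
  have hbot : ∀ z, g z ≠ ⊥ := by
    intro z; simp only [hg]; split_ifs <;> simp
  have hnonneg : ∀ z, (0:EReal) ≤ g z := by
    intro z; simp only [hg]; split_ifs with h1 h2
    · exact_mod_cast div_nonneg (Real.rpow_nonneg (norm_nonneg _) _) (Real.rpow_nonneg h1.le _)
    · exact le_refl _
    · exact le_top
  have hdom : ∀ (η : ℝ) (y : G), g (η, y) ≠ ⊤ → 0 < η ∨ (η = 0 ∧ y = 0) := by
    intro η y hz; by_contra h; push_neg at h
    exact hz (htop η y (not_lt.mpr h.1) (fun hc => h.2 hc.1 hc.2))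
  have hscale : ∀ (b : ℝ), 0 < b → ∀ (η : ℝ), 0 < η → ∀ y : G,
      ‖b • y‖ ^ p / (b*η) ^ (p-1) = b * (‖y‖ ^ p / η ^ (p-1)) := by
    intro b hbpos η hη y
    rw [norm_smul, Real.norm_of_nonneg hbpos.le, Real.mul_rpow hbpos.le (norm_nonneg _),
        Real.mul_rpow hbpos.le hη.le]
    have hbp : b ^ p = b ^ (p-1) * b := by
      rw [← Real.rpow_add_one hbpos.ne' (p-1)]; ring_nf
    rw [hbp]
    have h1 := (Real.rpow_pos_of_pos hbpos (p-1)).ne'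
    have h2 := (Real.rpow_pos_of_pos hη (p-1)).ne'
    field_simp

  -- convexity
  have hconv : ConvexE (ℝ × G) g := by
    rintro ⟨η₁, y₁⟩ ⟨η₂, y₂⟩ a b ha hb hab
    simp only [Prod.smul_mk, Prod.mk_add_mk, smul_eq_mul]
    rcases ha.lt_or_eq with hapos | ha0
    swap
    · have hb1 : b = 1 := by linarith
      simp [← ha0, hb1, one_smul]
    rcases hb.lt_or_eq with hbpos | hb0
    swap
    · have ha1 : a = 1 := by linarith
      simp [← hb0, ha1, one_smul]
    by_cases hx : g (η₁, y₁) = ⊤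
    · rw [hx, EReal.mul_top_of_pos (by exact_mod_cast hapos : (0:EReal) < (a:EReal)),
        EReal.top_add_of_ne_bot]
      · exact le_top
      · have h0 : (0:EReal) ≤ (b:EReal) * g (η₂, y₂) :=
          mul_nonneg (by exact_mod_cast hb) (hnonneg _)
        exact (EReal.bot_lt_zero.trans_le h0).ne'
    by_cases hy : g (η₂, y₂) = ⊤
    · rw [hy, EReal.mul_top_of_pos (by exact_mod_cast hbpos : (0:EReal) < (b:EReal)),
        EReal.add_top_of_ne_bot]
      · exact le_top
      · have h0 : (0:EReal) ≤ (a:EReal) * g (η₁, y₁) :=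
          mul_nonneg (by exact_mod_cast ha) (hnonneg _)
        exact (EReal.bot_lt_zero.trans_le h0).ne'
    rcases hdom η₁ y₁ hx with h1 | ⟨h10, h1y⟩ <;> rcases hdom η₂ y₂ hy with h2 | ⟨h20, h2y⟩
    · -- both positive
      have hc : 0 < a * η₁ + b * η₂ := by positivity
      rw [hval _ _ h1, hval _ _ h2, hval _ _ hc]
      rw [← EReal.coe_mul, ← EReal.coe_mul, ← EReal.coe_add, EReal.coe_le_coe_iff]
      exact persp_vec' hp ha hb hab h1 h2
    · -- x positive, y = (0,0)
      subst h20; subst h2y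
      rw [hzero, mul_zero, add_zero]
      have hy1 : a • y₁ + b • (0:G) = a • y₁ := by simp
      rw [hy1, hval _ _ h1, hval _ _ (mul_pos hapos h1), ← EReal.coe_mul,
        mul_zero, add_zero, EReal.coe_le_coe_iff]
      exact le_of_eq (hscale a hapos η₁ h1 y₁)
    · -- x = (0,0), y positive
      subst h10; subst h1y
      rw [hzero, mul_zero, zero_add]
      have hy2 : a • (0:G) + b • y₂ = b • y₂ := by simp
      rw [hy2, hval _ _ h2, hval _ _ (mul_pos hbpos h2), ← EReal.coe_mul,
        mul_zero, zero_add, EReal.coe_le_coe_iff]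
      exact le_of_eq (hscale b hbpos η₂ h2 y₂)
    · -- both (0,0)
      subst h10; subst h1y; subst h20; subst h2y
      simp only [mul_zero, add_zero, smul_zero, zero_add, hzero]
      exact le_refl _
  -- lower semicontinuity
  have hlsc : LowerSemicontinuous g := by
    rw [lowerSemicontinuous_iff_isClosed_preimage]
    intro c
    induction c using EReal.rec with
    | bot =>
      have : g ⁻¹' Set.Iic ⊥ = ∅ := by
        ext z; simp [le_bot_iff, hbot z]
      rw [this]; exact isClosed_empty
    | top =>
      have : g ⁻¹' Set.Iic ⊤ = Set.univ := by
        ext z; simp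
      rw [this]; exact isClosed_univ
    | coe r =>
      by_cases hr : 0 ≤ r
      · have hset : g ⁻¹' Set.Iic (r : EReal)
            = {z : ℝ × G | 0 ≤ z.1} ∩ {z : ℝ × G | ‖z.2‖ ^ p ≤ r * z.1 ^ (p-1)} := by
          ext ⟨η, y⟩
          simp only [Set.mem_preimage, Set.mem_Iic, Set.mem_inter_iff, Set.mem_setOf_eq]
          constructor
          · intro hz
            have hnt : g (η, y) ≠ ⊤ := fun h => by
              rw [h] at hz; exact (EReal.coe_ne_top r) (top_le_iff.mp hz)
            rcases hdom η y hnt with h1 | ⟨h10, h1y⟩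
            · refine ⟨h1.le, ?_⟩
              rw [hval _ _ h1] at hz
              have := EReal.coe_le_coe_iff.mp hz
              rwa [div_le_iff₀ (Real.rpow_pos_of_pos h1 _)] at this
            · subst h10; subst h1y
              simp [Real.zero_rpow hp0', norm_zero,
                Real.zero_rpow (show p ≠ 0 by linarith)]
          · rintro ⟨h0, hle⟩
            rcases h0.lt_or_eq with h1 | h1
            · rw [hval _ _ h1]
              exact EReal.coe_le_coe_iff.mpr
                ((div_le_iff₀ (Real.rpow_pos_of_pos h1 _)).mpr hle)
            · have hy0 : y = 0 := by
                rw [← h1, Real.zero_rpow hp0', mul_zero] at hle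
                have h2 := Real.rpow_nonneg (norm_nonneg y) p
                have h3 : ‖y‖ ^ p = 0 := le_antisymm hle h2
                have := (Real.rpow_eq_zero_iff_of_nonneg (norm_nonneg y)).mp h3
                simpa using this.1
              rw [← h1, hy0, hzero]
              exact_mod_cast hr
        rw [hset]
        exact IsClosed.inter (isClosed_le continuous_const continuous_fst)
          (isClosed_le
            ((Real.continuous_rpow_const (by linarith)).comp
              (continuous_norm.comp continuous_snd))
            (continuous_const.mul
              ((Real.continuous_rpow_const (by linarith)).comp continuous_fst)))
      · have hset : g ⁻¹' Set.Iic (r : EReal) = ∅ := by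
          ext z
          simp only [Set.mem_preimage, Set.mem_Iic, Set.mem_empty_iff_false, iff_false]
          intro hz
          have h0 := le_trans (hnonneg z) hz
          exact hr (by exact_mod_cast h0)
        rw [hset]; exact isClosed_empty
  refine ⟨⟨⟨hbot, ⟨(0, 0), by rw [hzero]; simp⟩⟩, hlsc, hconv⟩, hzero, ?_⟩
  -- the sequence part
  intro v hv α hαpos hanti hlim
  have hq : 0 < p / (p - 1) := div_pos (by linarith) hp0
  have hβ : ∀ n, 0 < α n ^ (p / (p-1)) := fun n => Real.rpow_pos_of_pos (hαpos n) _
  have hgval : ∀ n, g (α n ^ (p / (p-1)), α n • v) = ((1:ℝ) : EReal) := by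
    intro n
    rw [hval _ _ (hβ n)]
    congr 1
    rw [norm_smul, hv, mul_one, Real.norm_of_nonneg (hαpos n).le]
    have hexp : (α n ^ (p / (p-1))) ^ (p-1) = α n ^ p := by
      rw [← Real.rpow_mul (hαpos n).le, div_mul_cancel₀ p hp0']
    rw [hexp, div_self (Real.rpow_pos_of_pos (hαpos n) p).ne']
  refine ⟨fun n => by rw [hgval n]; exact EReal.coe_ne_top 1, ?_, ?_⟩
  · have h1 : Filter.Tendsto (fun n => α n ^ (p / (p-1))) Filter.atTop (nhds 0) := by
      have hc := (Real.continuous_rpow_const hq.le).tendsto 0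
      rw [Real.zero_rpow hq.ne'] at hc
      exact hc.comp hlim
    have h2 : Filter.Tendsto (fun n => α n • v) Filter.atTop (nhds 0) := by
      have := hlim.smul_const v
      rwa [zero_smul] at this
    exact h1.prodMk_nhds h2
  · simp only [hgval, EReal.coe_one]
    exact tendsto_const_nhds


end
end

section
/- Let 𝒢 be a real Hilbert space, let φ ∈ Γ₀(𝒢), let ψ ∈ Γ₀(𝒢) be such that dom φ ∩ dom ψ ≠ ∅, and let λ ∈ (0, +∞). Then the perspective of λφ + ψ equals λφ̃ + ψ̃ (pointwise on ℝ × 𝒢), and this function belongs to Γ₀(ℝ ⊕ 𝒢). -/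
open scoped RealInnerProductSpace Classical

noncomputable section

namespace PerspAux
open EReal

lemma mul_cancel_left {r : ℝ} (hr : r ≠ 0) (a : EReal) :
    ((r⁻¹ : ℝ) : EReal) * ((r : EReal) * a) = a := by
  rw [← mul_assoc, ← EReal.coe_mul, inv_mul_cancel₀ hr, EReal.coe_one, one_mul]

lemma mul_le_mul_left_iff {r : ℝ} (hr : 0 < r) {a b : EReal} :
    (r : EReal) * a ≤ (r : EReal) * b ↔ a ≤ b := by
  constructor
  · intro h
    have := mul_le_mul_of_nonneg_left h
      (by exact_mod_cast (inv_nonneg.2 hr.le) : (0:EReal) ≤ ((r⁻¹:ℝ):EReal))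
    rwa [mul_cancel_left hr.ne' a, mul_cancel_left hr.ne' b] at this
  · intro h
    exact mul_le_mul_of_nonneg_left h (by exact_mod_cast hr.le)

lemma mul_lt_mul_left_iff {r : ℝ} (hr : 0 < r) {a b : EReal} :
    (r : EReal) * a < (r : EReal) * b ↔ a < b := by
  rw [← not_le, ← not_le, mul_le_mul_left_iff hr]

lemma mul_ne_bot_of_pos {r : ℝ} (hr : 0 < r) {a : EReal} (ha : a ≠ ⊥) :
    (r : EReal) * a ≠ ⊥ := by
  induction a with
  | bot => exact absurd rfl ha
  | coe a => rw [← EReal.coe_mul]; exact EReal.coe_ne_bot _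
  | top => rw [EReal.coe_mul_top_of_pos hr]; exact top_ne_bot

lemma mul_pos_distrib {r : ℝ} (hr : 0 < r) (a b : EReal) :
    (r : EReal) * (a + b) = (r : EReal) * a + (r : EReal) * b := by
  induction a with
  | bot => simp [EReal.coe_mul_bot_of_pos hr]
  | coe a =>
    induction b with
    | bot => simp [EReal.coe_mul_bot_of_pos hr, ← EReal.coe_mul]
    | coe b => norm_cast; ring
    | top =>
      rw [coe_add_top, EReal.coe_mul_top_of_pos hr, ← EReal.coe_mul, coe_add_top]
  | top =>
    induction b with
    | bot => simp [EReal.coe_mul_bot_of_pos hr, EReal.coe_mul_top_of_pos hr]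
    | coe b =>
      rw [EReal.coe_mul_top_of_pos hr, ← EReal.coe_mul, top_add_coe, top_add_coe,
        EReal.coe_mul_top_of_pos hr]
    | top => simp [EReal.coe_mul_top_of_pos hr]

lemma mul_nonneg_distrib {r : ℝ} (hr : 0 ≤ r) (a b : EReal) :
    (r : EReal) * (a + b) = (r : EReal) * a + (r : EReal) * b := by
  rcases hr.eq_or_lt with h | h
  · simp [← h]
  · exact mul_pos_distrib h a b

lemma mul_sub_real {r : ℝ} (hr : 0 ≤ r) (a : EReal) (c : ℝ) :
    (r : EReal) * (a - (c : EReal)) = (r : EReal) * a - ((r * c : ℝ) : EReal) := by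
  have h1 : a - (c:EReal) = a + ((-c : ℝ) : EReal) := by
    rw [EReal.coe_neg]; rfl
  rw [h1, mul_nonneg_distrib hr, ← EReal.coe_mul]
  have h2 : (r * -c : ℝ) = -(r * c) := by ring
  rw [h2, EReal.coe_neg]
  rfl

lemma add_sub_add (A B : EReal) (c d : ℝ)
    (hA : A ≠ ⊥) (hB : B ≠ ⊥) :
    (A + B) - ((c : EReal) + (d : EReal)) = (A - (c:EReal)) + (B - (d:EReal)) := by
  induction A with
  | bot => exact absurd rfl hA
  | coe A =>
    induction B with
    | bot => exact absurd rfl hB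
    | coe B => norm_cast; ring
    | top =>
      rw [coe_add_top, EReal.top_sub_coe, ← EReal.coe_add, EReal.top_sub_coe,
        ← EReal.coe_sub, coe_add_top]
  | top =>
    induction B with
    | bot => exact absurd rfl hB
    | coe B =>
      rw [top_add_coe, EReal.top_sub_coe, ← EReal.coe_add, EReal.top_sub_coe,
        ← EReal.coe_sub, top_add_coe]
    | top => simp [← EReal.coe_add, EReal.top_sub_coe]

lemma sub_ne_bot {a : EReal} (ha : a ≠ ⊥) (c : ℝ) : a - (c : EReal) ≠ ⊥ := by
  induction a with
  | bot => exact absurd rfl ha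
  | coe a => rw [← EReal.coe_sub]; exact EReal.coe_ne_bot _
  | top => rw [EReal.top_sub_coe]; exact top_ne_bot

section RecFn

variable {G : Type*} [NormedAddCommGroup G] [InnerProductSpace ℝ G]
variable {f : G → EReal}

lemma recFn_ne_bot (hb : ∀ x, f x ≠ ⊥) {x₀ : G} (hx₀ : f x₀ ≠ ⊤) (y : G) :
    recFn f y ≠ ⊥ := by
  have hterm : f (x₀ + y) - f x₀ ≠ ⊥ := by
    lift f x₀ to ℝ using ⟨hx₀, hb x₀⟩ with r
    exact sub_ne_bot (hb _) r
  have hle : f (x₀ + y) - f x₀ ≤ recFn f y := le_iSup (fun x : {x : G // f x ≠ ⊤} =>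
    f ((x : G) + y) - f (x : G)) ⟨x₀, hx₀⟩
  exact fun h => hterm (le_bot_iff.1 (h ▸ hle))

lemma key_le (hb : ∀ x, f x ≠ ⊥) {x₀ : G} (hx₀ : f x₀ ≠ ⊤) (x y : G) :
    f (x + y) ≤ f x + recFn f y := by
  by_cases hx : f x = ⊤
  · rw [hx, top_add_of_ne_bot (recFn_ne_bot hb hx₀ y)]; exact le_top
  · have hle : f (x + y) - f x ≤ recFn f y := le_iSup (fun x : {x : G // f x ≠ ⊤} =>
      f ((x : G) + y) - f (x : G)) ⟨x, hx⟩
    have := add_le_add_right hle (f x)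
    lift f x to ℝ using ⟨hx, hb x⟩ with r
    rwa [add_comm (r:EReal) (f (x+y) - r), EReal.sub_add_cancel] at this

lemma nsmul_rec_le (hb : ∀ x, f x ≠ ⊥) {x₀ : G} (hx₀ : f x₀ ≠ ⊤) (x y : G) :
    ∀ n : ℕ, f (x + n • y) ≤ f x + (((n : ℝ)) : EReal) * recFn f y := by
  intro n
  induction n with
  | zero => simp
  | succ n ih =>
    have h1 : x + (n+1) • y = (x + n • y) + y := by
      rw [add_smul, one_smul, add_assoc]
    calc f (x + (n+1) • y) = f ((x + n • y) + y) := by rw [h1]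
      _ ≤ f (x + n • y) + recFn f y := key_le hb hx₀ _ _
      _ ≤ (f x + ((n:ℝ) : EReal) * recFn f y) + recFn f y := add_le_add_left ih _
      _ = f x + (((n:ℝ) : EReal) * recFn f y + recFn f y) := by rw [add_assoc]
      _ = f x + (((n+1:ℕ) : ℝ) : EReal) * recFn f y := by
          congr 1
          rw [show (((n+1:ℕ):ℝ) : EReal) = ((n:ℝ) : EReal) + ((1:ℝ) : EReal) by
            push_cast; rfl]
          rw [EReal.right_distrib_of_nonneg (by exact_mod_cast Nat.cast_nonneg n)
            (by norm_num), EReal.coe_one, one_mul]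

lemma smul_rec_le (hb : ∀ x, f x ≠ ⊥) (hc : ConvexE G f) {x₀ : G} (hx₀ : f x₀ ≠ ⊤)
    (x y : G) {s : ℝ} (hs : 0 < s) :
    f (x + s • y) ≤ f x + (s : EReal) * recFn f y := by
  set n : ℕ := ⌈s⌉₊ with hn
  have hsn : s ≤ (n : ℝ) := Nat.le_ceil s
  have hn0 : 0 < (n : ℝ) := lt_of_lt_of_le hs hsn
  have hnne : (n : ℝ) ≠ 0 := hn0.ne'
  set θ : ℝ := s / n with hθ
  have hθpos : 0 < θ := div_pos hs hn0
  have hθle : θ ≤ 1 := by rw [hθ, div_le_one hn0]; exact hsn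
  have hid : (1-θ) • x + θ • (x + n • y) = x + s • y := by
    rw [← Nat.cast_smul_eq_nsmul ℝ n y, smul_add, smul_smul, div_mul_cancel₀ s hnne,
      ← add_assoc, ← add_smul, _root_.sub_add_cancel, one_smul]
  have hconv := hc x (x + n • y) (1-θ) θ (by linarith) hθpos.le (by ring)
  rw [hid] at hconv
  calc f (x + s • y) ≤ ((1-θ:ℝ) : EReal) * f x + (θ : EReal) * f (x + n • y) := hconv
    _ ≤ ((1-θ:ℝ) : EReal) * f x + (θ : EReal) * (f x + ((n:ℝ) : EReal) * recFn f y) :=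
        add_le_add_right (mul_le_mul_of_nonneg_left (nsmul_rec_le hb hx₀ x y n)
          (by exact_mod_cast hθpos.le)) _
    _ = ((1-θ:ℝ) : EReal) * f x + ((θ : EReal) * f x
          + ((θ * (n:ℝ) : ℝ) : EReal) * recFn f y) := by
        rw [mul_pos_distrib hθpos, EReal.coe_mul, mul_assoc]
    _ = (((1-θ:ℝ) : EReal) + (θ : EReal)) * f x + ((θ * (n:ℝ) : ℝ) : EReal) * recFn f y := by
        rw [← add_assoc, EReal.right_distrib_of_nonneg (by exact_mod_cast (by linarith : (0:ℝ) ≤ 1-θ))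
          (by exact_mod_cast hθpos.le)]
    _ = f x + (s : EReal) * recFn f y := by
        rw [← EReal.coe_add, _root_.sub_add_cancel, EReal.coe_one, one_mul,
          div_mul_cancel₀ s hnne]

end RecFn
section DQ

variable {G : Type*} [NormedAddCommGroup G] [InnerProductSpace ℝ G]
variable {f φ ψ : G → EReal}

/-- Difference quotients along direction `y`, based at `x`. -/
def DQ (f : G → EReal) (x y : G) (n : ℕ) : EReal :=
  ((((n:ℝ)+1)⁻¹ : ℝ) : EReal) * (f (x + (n+1) • y) - f x)

lemma sub_lt_sub_real {b c : EReal} (d : ℝ) (h : b < c) :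
    b - (d:EReal) < c - (d:EReal) := by
  rw [EReal.sub_lt_iff (Or.inl (EReal.coe_ne_bot d)) (Or.inl (EReal.coe_ne_top d)),
    EReal.sub_add_cancel]
  exact h

lemma sub_le_sub_real {b c : EReal} (d : ℝ) (h : b ≤ c) :
    b - (d:EReal) ≤ c - (d:EReal) := by
  rw [EReal.sub_le_iff_le_add (Or.inl (EReal.coe_ne_bot d)) (Or.inl (EReal.coe_ne_top d)),
    EReal.sub_add_cancel]
  exact h

lemma DQ_mono (hb : ∀ x, f x ≠ ⊥) (hc : ConvexE G f) {x : G} (hx : f x ≠ ⊤) (y : G) :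
    Monotone (DQ f x y) := by
  intro m n hmn
  lift f x to ℝ using ⟨hx, hb x⟩ with r hr
  have hm0 : (0:ℝ) < (m:ℝ)+1 := by positivity
  have hn0 : (0:ℝ) < (n:ℝ)+1 := by positivity
  set θ : ℝ := ((m:ℝ)+1)/((n:ℝ)+1) with hθ
  have hθpos : 0 < θ := div_pos hm0 hn0
  have hθle : θ ≤ 1 := by
    rw [hθ, div_le_one hn0]
    have : (m:ℝ) ≤ n := by exact_mod_cast hmn
    linarith
  have hid : (1-θ) • x + θ • (x + (n+1) • y) = x + (m+1) • y := by
    rw [← Nat.cast_smul_eq_nsmul ℝ (n+1) y, smul_add, smul_smul,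
      show θ * ((n+1:ℕ):ℝ) = (m:ℝ)+1 by push_cast; rw [hθ, div_mul_cancel₀ _ hn0.ne'],
      ← add_assoc, ← add_smul, _root_.sub_add_cancel, one_smul,
      ← Nat.cast_smul_eq_nsmul ℝ (m+1) y]
    push_cast
    ring_nf
  have hconv := hc x (x + (n+1) • y) (1-θ) θ (by linarith) hθpos.le (by ring)
  rw [hid, ← hr] at hconv
  set F : EReal := f (x + (n+1) • y) with hF
  have hstep : f (x + (m+1) • y) - (r:EReal) ≤ (θ:EReal) * (F - (r:EReal)) := by
    have h2 : ((1-θ:ℝ):EReal) * (r:EReal) + (θ:EReal) * F - (r:EReal)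
        = (θ:EReal) * (F - (r:EReal)) := by
      rw [PerspAux.mul_sub_real hθpos.le, ← EReal.coe_mul, sub_eq_add_neg,
        add_comm ((((1-θ)*r : ℝ):EReal)) ((θ:EReal)*F), add_assoc, ← EReal.coe_neg,
        ← EReal.coe_add, show ((1-θ)*r + -r : ℝ) = -(θ*r) by ring, EReal.coe_neg,
        ← sub_eq_add_neg]
    calc f (x + (m+1) • y) - (r:EReal)
        ≤ ((1-θ:ℝ):EReal) * (r:EReal) + (θ:EReal) * F - (r:EReal) :=
          sub_le_sub_real r hconv
      _ = (θ:EReal) * (F - (r:EReal)) := h2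
  have := mul_le_mul_of_nonneg_left hstep
    (by exact_mod_cast (inv_nonneg.2 hm0.le) : (0:EReal) ≤ ((((m:ℝ)+1)⁻¹:ℝ):EReal))
  calc DQ f x y m = ((((m:ℝ)+1)⁻¹:ℝ):EReal) * (f (x + (m+1) • y) - (r:EReal)) := by
        rw [DQ, hr]
    _ ≤ ((((m:ℝ)+1)⁻¹:ℝ):EReal) * ((θ:EReal) * (F - (r:EReal))) := this
    _ = DQ f x y n := by
        rw [← mul_assoc, ← EReal.coe_mul, DQ, hr, ← hF]
        congr 2
        rw [hθ]
        field_simp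
end DQ
section DQ2

variable {G : Type*} [NormedAddCommGroup G] [InnerProductSpace ℝ G]
variable {f : G → EReal}

lemma DQ_le_recFn (hb : ∀ x, f x ≠ ⊥) {x₀ : G} (hx₀ : f x₀ ≠ ⊤) {x : G} (hx : f x ≠ ⊤)
    (y : G) (n : ℕ) : DQ f x y n ≤ recFn f y := by
  lift f x to ℝ using ⟨hx, hb x⟩ with r hr
  have hn0 : (0:ℝ) < (n:ℝ)+1 := by positivity
  have h1 : f (x + (n+1) • y) ≤ (r:EReal) + (((n:ℝ)+1 : ℝ):EReal) * recFn f y := by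
    have := nsmul_rec_le hb hx₀ x y (n+1)
    rw [← hr] at this
    convert this using 3
    push_cast; ring
  have h2 : f (x + (n+1) • y) - (r:EReal) ≤ (((n:ℝ)+1 : ℝ):EReal) * recFn f y := by
    rw [EReal.sub_le_iff_le_add (Or.inl (EReal.coe_ne_bot r)) (Or.inl (EReal.coe_ne_top r))]
    rwa [add_comm ((r:EReal))] at h1
  have h3 := mul_le_mul_of_nonneg_left h2
    (by exact_mod_cast (inv_nonneg.2 hn0.le) : (0:EReal) ≤ ((((n:ℝ)+1)⁻¹:ℝ):EReal))
  rw [mul_cancel_left hn0.ne'] at h3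
  calc DQ f x y n = ((((n:ℝ)+1)⁻¹:ℝ):EReal) * (f (x + (n+1) • y) - (r:EReal)) := by
        rw [DQ, hr]
    _ ≤ recFn f y := h3

lemma recFn_eq_iSup_DQ (hb : ∀ x, f x ≠ ⊥) (hc : ConvexE G f)
    (hl : LowerSemicontinuous f) {x : G} (hx : f x ≠ ⊤) (y : G) :
    recFn f y = ⨆ n, DQ f x y n := by
  apply le_antisymm
  · -- recFn ≤ sup of difference quotients: uses lower semicontinuity
    apply iSup_le
    rintro ⟨x', hx'⟩
    rw [← EReal.ge_of_forall_gt_iff_ge]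
    intro c hc'
    have hxr : f x ≠ ⊥ := hb x
    lift f x to ℝ using ⟨hx, hxr⟩ with r hr
    have hx'r : f x' ≠ ⊥ := hb x'
    lift f x' to ℝ using ⟨hx', hx'r⟩ with r' hr'
    -- from c < f (x' + y) - r'
    have h1 : ((c + r' : ℝ) : EReal) < f (x' + y) := by
      rw [EReal.coe_add]
      exact (EReal.lt_sub_iff_add_lt (Or.inl (EReal.coe_ne_bot r'))
        (Or.inl (EReal.coe_ne_top r'))).1 hc'
    obtain ⟨c₂, hc₂l, hc₂r⟩ := EReal.exists_between_coe_real h1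
    have hc₂l' : c + r' < c₂ := by exact_mod_cast hc₂l
    set θ : ℕ → ℝ := fun n => ((n:ℝ)+1)⁻¹ with hθdef
    have hθpos : ∀ n, 0 < θ n := fun n => by positivity
    have hθle : ∀ n, θ n ≤ 1 := fun n => by
      rw [hθdef]
      simp only
      rw [inv_le_one_iff₀]
      right; push_cast; linarith
    have hθto : Filter.Tendsto θ Filter.atTop (nhds 0) := by
      have := tendsto_one_div_add_atTop_nhds_zero_nat (𝕜 := ℝ)
      simpa [hθdef, one_div] using this
    set z : ℕ → G := fun n => (1 - θ n) • x' + θ n • (x + (n+1) • y) with hzdef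
    have hzalt : ∀ n, z n = ((1 - θ n) • x' + θ n • x) + y := by
      intro n
      rw [hzdef]
      simp only
      rw [← Nat.cast_smul_eq_nsmul ℝ (n+1) y, smul_add, smul_smul,
        show θ n * ((n+1:ℕ):ℝ) = 1 by push_cast; rw [hθdef]; field_simp,
        one_smul, add_assoc]
    have hzto : Filter.Tendsto z Filter.atTop (nhds (x' + y)) := by
      have h1' : Filter.Tendsto (fun n => (1 - θ n) • x') Filter.atTop (nhds x') := by
        have : Filter.Tendsto (fun n => 1 - θ n) Filter.atTop (nhds 1) := by
          simpa using (tendsto_const_nhds.sub hθto)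
        simpa using this.smul_const x'
      have h2' : Filter.Tendsto (fun n => θ n • x) Filter.atTop (nhds 0) := by
        simpa using hθto.smul_const x
      have := ((h1'.add h2').add tendsto_const_nhds :
        Filter.Tendsto (fun n => ((1 - θ n) • x' + θ n • x) + y) Filter.atTop
          (nhds ((x' + 0) + y)))
      simp only [add_zero] at this
      convert this using 2 with n
      exact hzalt n
    have hev1 : ∀ᶠ n in Filter.atTop, (c₂ : EReal) < f (z n) :=
      hzto.eventually (hl (x' + y) _ hc₂r)
    set ρ : ℕ → ℝ := fun n => c₂ - r' + θ n * (r' - r) with hρdef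
    have hρto : Filter.Tendsto ρ Filter.atTop (nhds (c₂ - r')) := by
      have : Filter.Tendsto (fun n => θ n * (r' - r)) Filter.atTop (nhds 0) := by
        simpa using hθto.mul_const (r' - r)
      simpa using (tendsto_const_nhds.add this : Filter.Tendsto
        (fun n => (c₂ - r') + θ n * (r' - r)) Filter.atTop (nhds ((c₂ - r') + 0)))
    have hev2 : ∀ᶠ n in Filter.atTop, c < ρ n :=
      hρto.eventually (eventually_gt_nhds (by linarith))
    obtain ⟨n, h1n, h2n⟩ := (hev1.and hev2).exists
    -- convexity at stage n
    have hconv := hc x' (x + (n+1) • y) (1 - θ n) (θ n)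
      (by linarith [hθle n]) (hθpos n).le (by ring)
    rw [← hr'] at hconv
    have hzn : f (z n) = f ((1 - θ n) • x' + θ n • (x + (n+1) • y)) := rfl
    rw [← hzn] at hconv
    set F : EReal := f (x + (n+1) • y) with hF
    have h4 : (c₂ : EReal) < ((1 - θ n : ℝ) : EReal) * (r' : EReal) + (θ n : EReal) * F :=
      lt_of_lt_of_le h1n hconv
    have h5 : ((c₂ - (1 - θ n) * r' : ℝ) : EReal) < (θ n : EReal) * F := by
      rw [EReal.coe_sub]
      exact EReal.sub_lt_of_lt_add' (by rwa [← EReal.coe_mul] at h4)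
    have h6 : ((ρ n : ℝ) : EReal) < DQ f x y n := by
      have hDQ : DQ f x y n = (θ n : EReal) * F - ((θ n * r : ℝ) : EReal) := by
        rw [DQ, ← hr, ← hF]
        exact PerspAux.mul_sub_real (hθpos n).le F r
      rw [hDQ]
      have := sub_lt_sub_real (θ n * r) h5
      rw [← EReal.coe_sub] at this
      have heq : (c₂ - (1 - θ n) * r' - θ n * r : ℝ) = ρ n := by rw [hρdef]; ring
      rwa [heq] at this
    have : (c : EReal) < DQ f x y n := lt_trans (by exact_mod_cast h2n) h6
    exact le_trans this.le (le_iSup _ n)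
  · exact iSup_le fun n => DQ_le_recFn hb hx hx y n

end DQ2
section Sum

variable {G : Type*} [NormedAddCommGroup G] [InnerProductSpace ℝ G]
variable {φ ψ : G → EReal}

lemma iSup_add_of_monotone (u v : ℕ → EReal) (hu : Monotone u) (hv : Monotone v) :
    (⨆ n, (u n + v n)) = (⨆ n, u n) + ⨆ n, v n := by
  apply le_antisymm
  · exact iSup_le fun n => add_le_add (le_iSup u n) (le_iSup v n)
  · apply EReal.add_le_of_forall_lt
    intro a ha b hb
    rw [lt_iSup_iff] at ha hb
    obtain ⟨m, hm⟩ := ha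
    obtain ⟨k, hk⟩ := hb
    calc a + b ≤ u (max m k) + v (max m k) :=
          add_le_add (hm.le.trans (hu (le_max_left m k))) (hk.le.trans (hv (le_max_right m k)))
      _ ≤ ⨆ n, (u n + v n) := le_iSup (fun n => u n + v n) (max m k)

lemma mul_iSup_comm {r : ℝ} (hr : 0 < r) (u : ℕ → EReal) :
    (r : EReal) * (⨆ n, u n) = ⨆ n, (r : EReal) * u n := by
  apply le_antisymm
  · have h1 : (⨆ n, u n) ≤ ((r⁻¹ : ℝ) : EReal) * ⨆ n, (r : EReal) * u n := by
      apply iSup_le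
      intro n
      have : u n = ((r⁻¹ : ℝ) : EReal) * ((r : EReal) * u n) := (mul_cancel_left hr.ne' _).symm
      rw [this]
      exact mul_le_mul_of_nonneg_left (le_iSup (fun n => (r : EReal) * u n) n)
        (by exact_mod_cast inv_nonneg.2 hr.le)
    have h2 := mul_le_mul_of_nonneg_left h1 (by exact_mod_cast hr.le : (0:EReal) ≤ (r:EReal))
    have h3 : (r : EReal) * (((r⁻¹ : ℝ) : EReal) * ⨆ n, (r : EReal) * u n)
        = ⨆ n, (r : EReal) * u n := by
      have := mul_cancel_left (inv_ne_zero hr.ne') (⨆ n, (r : EReal) * u n)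
      rwa [inv_inv r] at this
    rwa [h3] at h2
  · exact iSup_le fun n => mul_le_mul_of_nonneg_left (le_iSup u n)
      (by exact_mod_cast hr.le)

variable {lam : ℝ}

lemma sum_ne_bot (hbφ : ∀ x, φ x ≠ ⊥) (hbψ : ∀ x, ψ x ≠ ⊥) (hlam : 0 < lam) (x : G) :
    (lam : EReal) * φ x + ψ x ≠ ⊥ := by
  intro h
  rcases EReal.add_eq_bot_iff.1 h with h' | h'
  · exact mul_ne_bot_of_pos hlam (hbφ x) h'
  · exact hbψ x h'

lemma sum_convex (hcφ : ConvexE G φ) (hcψ : ConvexE G ψ) (hlam : 0 < lam) :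
    ConvexE G (fun x => (lam : EReal) * φ x + ψ x) := by
  intro x y a b ha hb hab
  simp only
  calc (lam : EReal) * φ (a • x + b • y) + ψ (a • x + b • y)
      ≤ (lam : EReal) * ((a:EReal) * φ x + (b:EReal) * φ y)
        + ((a:EReal) * ψ x + (b:EReal) * ψ y) :=
        add_le_add (mul_le_mul_of_nonneg_left (hcφ x y a b ha hb hab)
          (by exact_mod_cast hlam.le)) (hcψ x y a b ha hb hab)
    _ = ((a:EReal) * ((lam : EReal) * φ x) + (b:EReal) * ((lam : EReal) * φ y))
        + ((a:EReal) * ψ x + (b:EReal) * ψ y) := by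
        rw [mul_pos_distrib hlam, mul_left_comm ((lam:EReal)) ((a:EReal)),
          mul_left_comm ((lam:EReal)) ((b:EReal))]
    _ = (a:EReal) * ((lam : EReal) * φ x + ψ x) + (b:EReal) * ((lam : EReal) * φ y + ψ y) := by
        rw [mul_nonneg_distrib ha, mul_nonneg_distrib hb, add_add_add_comm]

lemma mul_lsc (hlφ : LowerSemicontinuous φ) (hlam : 0 < lam) :
    LowerSemicontinuous (fun x => (lam : EReal) * φ x) := by
  intro x c hc
  have hc' : ((lam⁻¹ : ℝ) : EReal) * c < φ x := by
    have := (mul_lt_mul_left_iff (inv_pos.2 hlam)).2 hc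
    rwa [mul_cancel_left hlam.ne'] at this
  filter_upwards [hlφ x _ hc'] with w hw
  have := (mul_lt_mul_left_iff hlam).2 hw
  have h3 : (lam : EReal) * (((lam⁻¹ : ℝ) : EReal) * c) = c := by
    have := mul_cancel_left (inv_ne_zero hlam.ne') c
    rwa [inv_inv lam] at this
  rwa [h3] at this

lemma sum_lsc (hbφ : ∀ x, φ x ≠ ⊥) (hbψ : ∀ x, ψ x ≠ ⊥)
    (hlφ : LowerSemicontinuous φ) (hlψ : LowerSemicontinuous ψ) (hlam : 0 < lam) :
    LowerSemicontinuous (fun x => (lam : EReal) * φ x + ψ x) :=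
  LowerSemicontinuous.add' (mul_lsc hlφ hlam) hlψ
    (fun x => EReal.continuousAt_add (Or.inr (hbψ x))
      (Or.inl (mul_ne_bot_of_pos hlam (hbφ x))))

lemma recFn_sum (hbφ : ∀ x, φ x ≠ ⊥) (hbψ : ∀ x, ψ x ≠ ⊥)
    (hcφ : ConvexE G φ) (hcψ : ConvexE G ψ)
    (hlφ : LowerSemicontinuous φ) (hlψ : LowerSemicontinuous ψ)
    {x₀ : G} (h1 : φ x₀ ≠ ⊤) (h2 : ψ x₀ ≠ ⊤) (hlam : 0 < lam) (y : G) :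
    recFn (fun x => (lam : EReal) * φ x + ψ x) y
      = (lam : EReal) * recFn φ y + recFn ψ y := by
  set f : G → EReal := fun x => (lam : EReal) * φ x + ψ x
  have hbf : ∀ x, f x ≠ ⊥ := sum_ne_bot hbφ hbψ hlam
  have hcf : ConvexE G f := sum_convex hcφ hcψ hlam
  have hlf : LowerSemicontinuous f := sum_lsc hbφ hbψ hlφ hlψ hlam
  obtain ⟨r₁, hr₁⟩ : ∃ r : ℝ, φ x₀ = (r : EReal) :=
    ⟨(φ x₀).toReal, (EReal.coe_toReal h1 (hbφ x₀)).symm⟩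
  obtain ⟨r₂, hr₂⟩ : ∃ r : ℝ, ψ x₀ = (r : EReal) :=
    ⟨(ψ x₀).toReal, (EReal.coe_toReal h2 (hbψ x₀)).symm⟩
  have hfx₀ : f x₀ = ((lam * r₁ + r₂ : ℝ) : EReal) := by
    rw [show f x₀ = (lam : EReal) * φ x₀ + ψ x₀ from rfl, hr₁, hr₂,
      ← EReal.coe_mul, ← EReal.coe_add]
  have hfx₀' : f x₀ ≠ ⊤ := by rw [hfx₀]; exact EReal.coe_ne_top _
  -- pointwise identity of difference quotients
  have hDQ : ∀ n, DQ f x₀ y n = (lam : EReal) * DQ φ x₀ y n + DQ ψ x₀ y n := by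
    intro n
    have hθ : (0:ℝ) < ((n:ℝ)+1)⁻¹ := by positivity
    have hsplit : f (x₀ + (n+1) • y) - f x₀
        = ((lam : EReal) * (φ (x₀ + (n+1) • y) - (r₁ : EReal)))
          + (ψ (x₀ + (n+1) • y) - (r₂ : EReal)) := by
      rw [hfx₀]
      have hA : (lam : EReal) * φ (x₀ + (n+1) • y) ≠ ⊥ :=
        mul_ne_bot_of_pos hlam (hbφ _)
      have hB : ψ (x₀ + (n+1) • y) ≠ ⊥ := hbψ _
      have hco : ((lam * r₁ + r₂ : ℝ) : EReal) = ((lam * r₁ : ℝ) : EReal) + (r₂ : EReal) :=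
        EReal.coe_add _ _
      rw [show f (x₀ + (n+1) • y)
          = (lam : EReal) * φ (x₀ + (n+1) • y) + ψ (x₀ + (n+1) • y) from rfl]
      rw [hco, add_sub_add _ _ _ _ hA hB, ← mul_sub_real hlam.le]
    rw [DQ, DQ, DQ, hr₁, hr₂, hsplit, mul_pos_distrib hθ, ← mul_assoc, ← mul_assoc,
      ← EReal.coe_mul, ← EReal.coe_mul, mul_comm (((n:ℝ)+1)⁻¹) lam]
  have hmonoφ : Monotone (fun n => (lam : EReal) * DQ φ x₀ y n) := fun m n hmn =>
    mul_le_mul_of_nonneg_left (DQ_mono hbφ hcφ h1 y hmn) (by exact_mod_cast hlam.le)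
  have hmonoψ : Monotone (DQ ψ x₀ y) := DQ_mono hbψ hcψ h2 y
  calc recFn f y = ⨆ n, DQ f x₀ y n := recFn_eq_iSup_DQ hbf hcf hlf hfx₀' y
    _ = ⨆ n, ((lam : EReal) * DQ φ x₀ y n + DQ ψ x₀ y n) := by
        exact iSup_congr hDQ
    _ = (⨆ n, (lam : EReal) * DQ φ x₀ y n) + ⨆ n, DQ ψ x₀ y n :=
        iSup_add_of_monotone _ _ hmonoφ hmonoψ
    _ = (lam : EReal) * (⨆ n, DQ φ x₀ y n) + ⨆ n, DQ ψ x₀ y n := by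
        rw [mul_iSup_comm hlam]
    _ = (lam : EReal) * recFn φ y + recFn ψ y := by
        rw [← recFn_eq_iSup_DQ hbφ hcφ hlφ h1 y, ← recFn_eq_iSup_DQ hbψ hcψ hlψ h2 y]

end Sum
section Persp

variable {G : Type*} [NormedAddCommGroup G] [InnerProductSpace ℝ G]
variable {f : G → EReal}

lemma mul_ne_bot_of_nonneg {r : ℝ} (hr : 0 ≤ r) {a : EReal} (ha : a ≠ ⊥) :
    (r : EReal) * a ≠ ⊥ := by
  rcases hr.eq_or_lt with h | h
  · simp [← h]
  · exact mul_ne_bot_of_pos h ha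

lemma persp_pos {p : ℝ × G} (h : 0 < p.1) :
    persp f p = (p.1 : EReal) * f (p.1⁻¹ • p.2) := by
  simp only [persp]; rw [if_pos h]

lemma persp_zero {p : ℝ × G} (h : p.1 = 0) : persp f p = recFn f p.2 := by
  simp only [persp]; rw [if_neg (by rw [h]; exact lt_irrefl 0), if_pos h]

lemma persp_neg {p : ℝ × G} (h : p.1 < 0) : persp f p = ⊤ := by
  simp only [persp]; rw [if_neg (by exact not_lt.2 h.le), if_neg h.ne]

lemma persp_ne_bot (hb : ∀ x, f x ≠ ⊥) {x₀ : G} (hx₀ : f x₀ ≠ ⊤) (z : ℝ × G) :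
    persp f z ≠ ⊥ := by
  rcases lt_trichotomy 0 z.1 with h | h | h
  · rw [persp_pos h]; exact mul_ne_bot_of_pos h (hb _)
  · rw [persp_zero h.symm]; exact recFn_ne_bot hb hx₀ _
  · rw [persp_neg h]; exact top_ne_bot

lemma recFn_comb (hb : ∀ x, f x ≠ ⊥) (hc : ConvexE G f) (y₁ y₂ : G) {a b : ℝ}
    (ha : 0 ≤ a) (hb' : 0 ≤ b) (hab : a + b = 1) :
    recFn f (a • y₁ + b • y₂) ≤ (a : EReal) * recFn f y₁ + (b : EReal) * recFn f y₂ := by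
  apply iSup_le
  rintro ⟨x, hx⟩
  obtain ⟨r, hr⟩ : ∃ r : ℝ, f x = (r : EReal) :=
    ⟨(f x).toReal, (EReal.coe_toReal hx (hb x)).symm⟩
  have hid : x + (a • y₁ + b • y₂) = a • (x + y₁) + b • (x + y₂) := by
    rw [smul_add, smul_add, add_add_add_comm, ← add_smul, hab, one_smul]
  have hconv := hc (x + y₁) (x + y₂) a b ha hb' hab
  have hrsplit : (r : EReal) = ((a * r : ℝ) : EReal) + ((b * r : ℝ) : EReal) := by
    rw [← EReal.coe_add, ← add_mul, hab, one_mul]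
  calc f (x + (a • y₁ + b • y₂)) - f x
      = f (a • (x + y₁) + b • (x + y₂)) - (r : EReal) := by rw [hid, hr]
    _ ≤ ((a : EReal) * f (x + y₁) + (b : EReal) * f (x + y₂)) - (r : EReal) :=
        sub_le_sub_real r hconv
    _ = ((a : EReal) * f (x + y₁) - ((a * r : ℝ) : EReal))
        + ((b : EReal) * f (x + y₂) - ((b * r : ℝ) : EReal)) := by
        rw [hrsplit]
        exact add_sub_add _ _ _ _ (mul_ne_bot_of_nonneg ha (hb _))
          (mul_ne_bot_of_nonneg hb' (hb _))
    _ = (a : EReal) * (f (x + y₁) - (r : EReal)) + (b : EReal) * (f (x + y₂) - (r : EReal)) := by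
        rw [mul_sub_real ha, mul_sub_real hb']
    _ ≤ (a : EReal) * recFn f y₁ + (b : EReal) * recFn f y₂ := by
        refine add_le_add (mul_le_mul_of_nonneg_left ?_ (by exact_mod_cast ha))
          (mul_le_mul_of_nonneg_left ?_ (by exact_mod_cast hb'))
        · rw [← hr]
          exact le_iSup (fun x : {x : G // f x ≠ ⊤} => f ((x:G) + y₁) - f (x:G)) ⟨x, hx⟩
        · rw [← hr]
          exact le_iSup (fun x : {x : G // f x ≠ ⊤} => f ((x:G) + y₂) - f (x:G)) ⟨x, hx⟩

lemma persp_convex (hb : ∀ x, f x ≠ ⊥) (hc : ConvexE G f) {x₀ : G} (hx₀ : f x₀ ≠ ⊤) :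
    ConvexE (ℝ × G) (persp f) := by
  intro p q a b ha hb' hab
  rcases ha.eq_or_lt with ha0 | hapos
  · have hb1 : b = 1 := by linarith
    simp only [← ha0, hb1, zero_smul, one_smul, zero_add, EReal.coe_zero, EReal.coe_one,
      zero_mul, one_mul, le_refl]
  rcases hb'.eq_or_lt with hb0 | hbpos
  · have ha1 : a = 1 := by linarith
    simp only [← hb0, ha1, zero_smul, one_smul, add_zero, EReal.coe_zero, EReal.coe_one,
      zero_mul, one_mul, le_refl]
  have hfst : (a • p + b • q).1 = a * p.1 + b * q.1 := rfl
  have hsnd : (a • p + b • q).2 = a • p.2 + b • q.2 := rfl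
  rcases lt_trichotomy p.1 0 with h1 | h1 | h1
  · rw [persp_neg h1, EReal.coe_mul_top_of_pos hapos,
      top_add_of_ne_bot (mul_ne_bot_of_pos hbpos (persp_ne_bot hb hx₀ q))]
    exact le_top
  · rcases lt_trichotomy q.1 0 with h2 | h2 | h2
    · rw [persp_neg h2, EReal.coe_mul_top_of_pos hbpos,
        add_top_of_ne_bot (mul_ne_bot_of_pos hapos (persp_ne_bot hb hx₀ p))]
      exact le_top
    · -- p.1 = 0, q.1 = 0
      rw [persp_zero h1, persp_zero h2, persp_zero (by rw [hfst, h1, h2]; ring)]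
      rw [hsnd]
      exact recFn_comb hb hc p.2 q.2 ha hb' hab
    · -- p.1 = 0, q.1 > 0
      have hη : 0 < (a • p + b • q).1 := by rw [hfst, h1]; positivity
      rw [persp_zero h1, persp_pos h2, persp_pos hη]
      set η : ℝ := b * q.1 with hηdef
      have hη' : (a • p + b • q).1 = η := by rw [hfst, h1]; ring
      have hηpos : 0 < η := by positivity
      set s : ℝ := a / η with hsdef
      have hspos : 0 < s := by positivity
      have hidv : ((a • p + b • q).1)⁻¹ • (a • p + b • q).2
          = (q.1⁻¹ • q.2) + s • p.2 := by
        rw [hη', hsnd, smul_add, smul_smul, smul_smul, hsdef, hηdef]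
        rw [show η⁻¹ * a = a / η from (div_eq_inv_mul a η).symm, hηdef]
        rw [show (b * q.1)⁻¹ * b = q.1⁻¹ by field_simp]
        rw [add_comm]
      rw [hidv, hη']
      calc (η : EReal) * f (q.1⁻¹ • q.2 + s • p.2)
          ≤ (η : EReal) * (f (q.1⁻¹ • q.2) + (s : EReal) * recFn f p.2) :=
            mul_le_mul_of_nonneg_left (smul_rec_le hb hc hx₀ _ _ hspos)
              (by exact_mod_cast hηpos.le)
        _ = (η : EReal) * f (q.1⁻¹ • q.2) + ((η * s : ℝ) : EReal) * recFn f p.2 := by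
            rw [mul_pos_distrib hηpos]; congr 1; rw [← mul_assoc, ← EReal.coe_mul]
        _ = (a : EReal) * recFn f p.2 + (b : EReal) * ((q.1 : EReal) * f (q.1⁻¹ • q.2)) := by
            rw [show η * s = a by rw [hsdef]; field_simp, hηdef, EReal.coe_mul, mul_assoc,
              add_comm]
  · rcases lt_trichotomy q.1 0 with h2 | h2 | h2
    · rw [persp_neg h2, EReal.coe_mul_top_of_pos hbpos,
        add_top_of_ne_bot (mul_ne_bot_of_pos hapos (persp_ne_bot hb hx₀ p))]
      exact le_top
    · -- p.1 > 0, q.1 = 0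
      have hη : 0 < (a • p + b • q).1 := by
        rw [hfst, h2, mul_zero, add_zero]; positivity
      rw [persp_pos h1, persp_zero h2, persp_pos hη]
      set η : ℝ := a * p.1 with hηdef
      have hη' : (a • p + b • q).1 = η := by rw [hfst, h2]; ring
      have hηpos : 0 < η := by positivity
      set s : ℝ := b / η with hsdef
      have hspos : 0 < s := by positivity
      have hidv : ((a • p + b • q).1)⁻¹ • (a • p + b • q).2
          = (p.1⁻¹ • p.2) + s • q.2 := by
        rw [hη', hsnd, smul_add, smul_smul, smul_smul, hsdef, hηdef]
        rw [show (a * p.1)⁻¹ * a = p.1⁻¹ by field_simp]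
        rw [show (a * p.1)⁻¹ * b = b / (a * p.1) from (div_eq_inv_mul b _).symm]
      rw [hidv, hη']
      calc (η : EReal) * f (p.1⁻¹ • p.2 + s • q.2)
          ≤ (η : EReal) * (f (p.1⁻¹ • p.2) + (s : EReal) * recFn f q.2) :=
            mul_le_mul_of_nonneg_left (smul_rec_le hb hc hx₀ _ _ hspos)
              (by exact_mod_cast hηpos.le)
        _ = (η : EReal) * f (p.1⁻¹ • p.2) + ((η * s : ℝ) : EReal) * recFn f q.2 := by
            rw [mul_pos_distrib hηpos]; congr 1; rw [← mul_assoc, ← EReal.coe_mul]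
        _ = (a : EReal) * ((p.1 : EReal) * f (p.1⁻¹ • p.2)) + (b : EReal) * recFn f q.2 := by
            rw [show η * s = b by rw [hsdef]; field_simp, hηdef, EReal.coe_mul, mul_assoc]
    · -- p.1 > 0, q.1 > 0
      have hη : 0 < (a • p + b • q).1 := by rw [hfst]; positivity
      rw [persp_pos h1, persp_pos h2, persp_pos hη]
      set η : ℝ := a * p.1 + b * q.1 with hηdef
      have hη' : (a • p + b • q).1 = η := hfst
      have hηpos : 0 < η := by positivity
      set α : ℝ := a * p.1 / η with hαdef
      set β : ℝ := b * q.1 / η with hβdef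
      have hα : 0 ≤ α := by positivity
      have hβ : 0 ≤ β := by positivity
      have hαβ : α + β = 1 := by rw [hαdef, hβdef]; field_simp; rw [hηdef]
      have hidv : ((a • p + b • q).1)⁻¹ • (a • p + b • q).2
          = α • (p.1⁻¹ • p.2) + β • (q.1⁻¹ • q.2) := by
        rw [hη', hsnd, smul_add, smul_smul, smul_smul, smul_smul, smul_smul]
        have e1 : η⁻¹ * a = α * p.1⁻¹ := by
          rw [hαdef]; field_simp
        have e2 : η⁻¹ * b = β * q.1⁻¹ := by
          rw [hβdef]; field_simp
        rw [e1, e2]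
      rw [hidv, hη']
      have hconv := hc (p.1⁻¹ • p.2) (q.1⁻¹ • q.2) α β hα hβ hαβ
      calc (η : EReal) * f (α • (p.1⁻¹ • p.2) + β • (q.1⁻¹ • q.2))
          ≤ (η : EReal) * ((α : EReal) * f (p.1⁻¹ • p.2) + (β : EReal) * f (q.1⁻¹ • q.2)) :=
            mul_le_mul_of_nonneg_left hconv (by exact_mod_cast hηpos.le)
        _ = ((η * α : ℝ) : EReal) * f (p.1⁻¹ • p.2) + ((η * β : ℝ) : EReal) * f (q.1⁻¹ • q.2) := by
            rw [mul_pos_distrib hηpos, EReal.coe_mul, EReal.coe_mul, mul_assoc, mul_assoc]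
        _ = (a : EReal) * ((p.1 : EReal) * f (p.1⁻¹ • p.2))
            + (b : EReal) * ((q.1 : EReal) * f (q.1⁻¹ • q.2)) := by
            rw [show η * α = a * p.1 by rw [hαdef]; field_simp,
              show η * β = b * q.1 by rw [hβdef]; field_simp,
              EReal.coe_mul, EReal.coe_mul, mul_assoc, mul_assoc]

end Persp
section Lsc

variable {G : Type*} [NormedAddCommGroup G] [InnerProductSpace ℝ G]
variable {f : G → EReal}

lemma recFn_lsc (hb : ∀ x, f x ≠ ⊥) (hl : LowerSemicontinuous f) :
    LowerSemicontinuous (recFn f) := by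
  have : ∀ x : {x : G // f x ≠ ⊤}, LowerSemicontinuous (fun y => f ((x:G) + y) - f (x:G)) := by
    rintro ⟨x, hx⟩
    obtain ⟨r, hr⟩ : ∃ r : ℝ, f x = (r : EReal) :=
      ⟨(f x).toReal, (EReal.coe_toReal hx (hb x)).symm⟩
    have h1 : LowerSemicontinuous (fun y => f (x + y)) := by
      intro y₀ c hc
      exact ((continuous_const.add continuous_id).continuousAt).eventually (hl (x + y₀) c hc)
    have h2 : LowerSemicontinuous (fun y => f (x + y) + ((-r : ℝ) : EReal)) :=
      LowerSemicontinuous.add' h1 lowerSemicontinuous_const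
        (fun y => EReal.continuousAt_add (Or.inr (EReal.coe_ne_bot _))
          (Or.inr (EReal.coe_ne_top _)))
    simp only
    convert h2 using 2 with y
    rw [hr, EReal.coe_neg, sub_eq_add_neg]
  exact lowerSemicontinuous_iSup this

lemma lsc_of_real_levels {α : Type*} [TopologicalSpace α] (F : α → EReal)
    (hnb : ∀ z, F z ≠ ⊥)
    (H : ∀ z, ∀ c : ℝ, (c : EReal) < F z → ∀ᶠ w in nhds z, (c : EReal) < F w) :
    LowerSemicontinuous F := by
  intro z c hcz
  induction c with
  | bot => exact Filter.Eventually.of_forall (fun w => (hnb w).bot_lt)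
  | coe c => exact H z c hcz
  | top => exact absurd hcz not_top_lt

lemma persp_lsc (hb : ∀ x, f x ≠ ⊥) (hc : ConvexE G f) (hl : LowerSemicontinuous f)
    {x₀ : G} (hx₀ : f x₀ ≠ ⊤) : LowerSemicontinuous (persp f) := by
  apply lsc_of_real_levels _ (persp_ne_bot hb hx₀)
  rintro ⟨η₀, y₀⟩ c hcz
  rcases lt_trichotomy 0 η₀ with h | h | h
  · -- positive first coordinate
    rw [persp_pos (show 0 < (η₀, y₀).1 from h)] at hcz
    have h2 : ((c / η₀ : ℝ) : EReal) < f (η₀⁻¹ • y₀) := by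
      have := (mul_lt_mul_left_iff (inv_pos.2 h)).2 hcz
      rw [mul_cancel_left h.ne'] at this
      rw [← EReal.coe_mul] at this
      rwa [show η₀⁻¹ * c = c / η₀ from (div_eq_inv_mul c η₀).symm] at this
    obtain ⟨m, hm1, hm2⟩ := EReal.exists_between_coe_real h2
    have hm1' : c / η₀ < m := by exact_mod_cast hm1
    have hev1 : ∀ᶠ w : ℝ × G in nhds (η₀, y₀), 0 < w.1 ∧ c < w.1 * m := by
      have hopen : IsOpen {w : ℝ × G | 0 < w.1 ∧ c < w.1 * m} :=
        (isOpen_lt continuous_const continuous_fst).inter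
          (isOpen_lt continuous_const (continuous_fst.mul continuous_const))
      have hmem : (η₀, y₀) ∈ {w : ℝ × G | 0 < w.1 ∧ c < w.1 * m} :=
        ⟨h, by have := (div_lt_iff₀ h).1 hm1'; linarith [this]⟩
      exact hopen.mem_nhds hmem
    have hkc : ContinuousAt (fun w : ℝ × G => w.1⁻¹ • w.2) (η₀, y₀) :=
      (continuous_fst.continuousAt.inv₀ h.ne').smul continuous_snd.continuousAt
    have hev2 : ∀ᶠ w : ℝ × G in nhds (η₀, y₀), (m : EReal) < f (w.1⁻¹ • w.2) :=
      hkc.eventually (hl (η₀⁻¹ • y₀) (m : EReal) hm2)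
    filter_upwards [hev1, hev2] with w hw1 hw2
    rw [persp_pos hw1.1]
    calc (c : EReal) < ((w.1 * m : ℝ) : EReal) := by exact_mod_cast hw1.2
      _ = (w.1 : EReal) * (m : EReal) := EReal.coe_mul _ _
      _ ≤ (w.1 : EReal) * f (w.1⁻¹ • w.2) :=
          mul_le_mul_of_nonneg_left hw2.le (by exact_mod_cast hw1.1.le)
  · -- zero first coordinate
    rw [persp_zero (show (η₀, y₀).1 = 0 from h.symm)] at hcz
    obtain ⟨c₂, hc₂1, hc₂2⟩ := EReal.exists_between_coe_real hcz
    have hc₂1' : c < c₂ := by exact_mod_cast hc₂1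
    rw [recFn, lt_iSup_iff] at hc₂2
    obtain ⟨⟨x, hx⟩, hterm⟩ := hc₂2
    obtain ⟨r, hr⟩ : ∃ r : ℝ, f x = (r : EReal) :=
      ⟨(f x).toReal, (EReal.coe_toReal hx (hb x)).symm⟩
    rw [hr] at hterm
    have h3 : ((c₂ + r : ℝ) : EReal) < f (x + y₀) := by
      rw [EReal.coe_add]
      exact (EReal.lt_sub_iff_add_lt (Or.inl (EReal.coe_ne_bot r))
        (Or.inl (EReal.coe_ne_top r))).1 hterm
    have huc : ContinuousAt (fun w : ℝ × G => (1 - w.1) • x + w.2) (η₀, y₀) :=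
      (((continuous_const.sub continuous_fst).smul continuous_const).add
        continuous_snd).continuousAt
    have huz : (fun w : ℝ × G => (1 - w.1) • x + w.2) (η₀, y₀) = x + y₀ := by
      simp only [← h, sub_zero, one_smul]
    have hev1 : ∀ᶠ w : ℝ × G in nhds (η₀, y₀),
        ((c₂ + r : ℝ) : EReal) < f ((1 - w.1) • x + w.2) := by
      have := huc.eventually (huz ▸ hl (x + y₀) _ h3)
      exact this
    have hev2 : ∀ᶠ w : ℝ × G in nhds (η₀, y₀), |w.1 * r| < c₂ - c ∧ w.1 < 1 := by
      have hopen : IsOpen {w : ℝ × G | |w.1 * r| < c₂ - c ∧ w.1 < 1} :=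
        (isOpen_lt ((continuous_fst.mul continuous_const).abs) continuous_const).inter
          (isOpen_lt continuous_fst continuous_const)
      have hmem : (η₀, y₀) ∈ {w : ℝ × G | |w.1 * r| < c₂ - c ∧ w.1 < 1} := by
        constructor
        · show |(η₀, y₀).1 * r| < c₂ - c
          rw [show (η₀, y₀).1 = 0 from h.symm, zero_mul, _root_.abs_zero]
          linarith
        · show (η₀, y₀).1 < 1
          rw [show (η₀, y₀).1 = 0 from h.symm]
          norm_num
      exact hopen.mem_nhds hmem
    have hev3 : ∀ᶠ w : ℝ × G in nhds (η₀, y₀), (c : EReal) < recFn f w.2 := by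
      have hsnd : Filter.Tendsto (Prod.snd : ℝ × G → G) (nhds (η₀, y₀)) (nhds y₀) :=
        continuous_snd.continuousAt
      exact hsnd.eventually (recFn_lsc hb hl y₀ (c : EReal) hcz)
    filter_upwards [hev1, hev2, hev3] with w h1 h2 h3'
    rcases lt_trichotomy 0 w.1 with hw | hw | hw
    · rw [persp_pos hw]
      have hid : (1 - w.1) • x + w.2 = (1 - w.1) • x + w.1 • (w.1⁻¹ • w.2) := by
        rw [smul_smul, mul_inv_cancel₀ hw.ne', one_smul]
      have hconv := hc x (w.1⁻¹ • w.2) (1 - w.1) w.1 (by linarith [h2.2]) hw.le (by ring)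
      rw [← hid, hr] at hconv
      have h4 : ((c₂ + r : ℝ) : EReal)
          < (((1 - w.1) * r : ℝ) : EReal) + (w.1 : EReal) * f (w.1⁻¹ • w.2) := by
        refine lt_of_lt_of_le h1 ?_
        rw [← EReal.coe_mul] at hconv
        exact hconv
      have h5 : ((c₂ + r - (1 - w.1) * r : ℝ) : EReal) < (w.1 : EReal) * f (w.1⁻¹ • w.2) := by
        rw [EReal.coe_sub]
        exact EReal.sub_lt_of_lt_add' h4
      have h6 : c < c₂ + r - (1 - w.1) * r := by
        have habs := neg_abs_le (w.1 * r)
        have : c₂ + r - (1 - w.1) * r = c₂ + w.1 * r := by ring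
        rw [this]
        linarith [h2.1]
      calc (c : EReal) < ((c₂ + r - (1 - w.1) * r : ℝ) : EReal) := by exact_mod_cast h6
        _ < (w.1 : EReal) * f (w.1⁻¹ • w.2) := h5
    · rw [persp_zero hw.symm]
      exact h3'
    · rw [persp_neg hw]
      exact EReal.coe_lt_top c
  · -- negative first coordinate
    have hev : ∀ᶠ w : ℝ × G in nhds (η₀, y₀), w.1 < 0 :=
      (isOpen_lt continuous_fst continuous_const).mem_nhds (by exact h)
    filter_upwards [hev] with w hw
    rw [persp_neg hw]
    exact EReal.coe_lt_top c

end Lsc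
end PerspAux

/-- the perspective of `λφ + ψ` equals `λφ̃ + ψ̃` and belongs to
`Γ₀(ℝ ⊕ 𝒢)`. -/
theorem perspective_sum
    {G : Type*} [NormedAddCommGroup G] [InnerProductSpace ℝ G] [CompleteSpace G]
    (φ ψ : G → EReal) (hφ : Gamma0 G φ) (hψ : Gamma0 G ψ)
    (hdom : ∃ x : G, φ x ≠ ⊤ ∧ ψ x ≠ ⊤)
    (lam : ℝ) (hlam : 0 < lam) :
    (∀ z : ℝ × G,
        persp (fun x => (lam : EReal) * φ x + ψ x) z
          = (lam : EReal) * persp φ z + persp ψ z) ∧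
    Gamma0 (ℝ × G) (persp (fun x => (lam : EReal) * φ x + ψ x)) := by
  obtain ⟨⟨hbφ, -⟩, hlφ, hcφ⟩ := hφ
  obtain ⟨⟨hbψ, -⟩, hlψ, hcψ⟩ := hψ
  obtain ⟨x₀, hx₁, hx₂⟩ := hdom
  have hbf : ∀ x, (lam : EReal) * φ x + ψ x ≠ ⊥ := PerspAux.sum_ne_bot hbφ hbψ hlam
  have hcf : ConvexE G (fun x => (lam : EReal) * φ x + ψ x) :=
    PerspAux.sum_convex hcφ hcψ hlam
  have hlf : LowerSemicontinuous (fun x => (lam : EReal) * φ x + ψ x) :=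
    PerspAux.sum_lsc hbφ hbψ hlφ hlψ hlam
  have hfx₀ : (lam : EReal) * φ x₀ + ψ x₀ ≠ ⊤ := by
    obtain ⟨r₁, hr₁⟩ : ∃ r : ℝ, φ x₀ = (r : EReal) :=
      ⟨(φ x₀).toReal, (EReal.coe_toReal hx₁ (hbφ x₀)).symm⟩
    obtain ⟨r₂, hr₂⟩ : ∃ r : ℝ, ψ x₀ = (r : EReal) :=
      ⟨(ψ x₀).toReal, (EReal.coe_toReal hx₂ (hbψ x₀)).symm⟩
    rw [hr₁, hr₂, ← EReal.coe_mul, ← EReal.coe_add]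
    exact EReal.coe_ne_top _
  constructor
  · intro z
    rcases lt_trichotomy 0 z.1 with h | h | h
    · simp only [PerspAux.persp_pos h]
      rw [PerspAux.mul_pos_distrib h, mul_left_comm]
    · simp only [PerspAux.persp_zero h.symm]
      exact PerspAux.recFn_sum hbφ hbψ hcφ hcψ hlφ hlψ hx₁ hx₂ hlam z.2
    · simp only [PerspAux.persp_neg h]
      rw [EReal.coe_mul_top_of_pos hlam, EReal.top_add_top]
  · refine ⟨⟨PerspAux.persp_ne_bot hbf hfx₀, ⟨((1:ℝ), x₀), ?_⟩⟩,
      PerspAux.persp_lsc hbf hcf hlf hfx₀, PerspAux.persp_convex hbf hcf hfx₀⟩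
    have hval : persp (fun x => (lam : EReal) * φ x + ψ x) ((1:ℝ), x₀)
        = (lam : EReal) * φ x₀ + ψ x₀ := by
      rw [PerspAux.persp_pos (by norm_num : (0:ℝ) < (((1:ℝ), x₀) : ℝ × G).1)]
      norm_num
    rw [hval]
    exact hfx₀

end
end

section
/- Let 𝒣 and 𝒢 be real Hilbert spaces, let φ ∈ Γ₀(𝒢), and let Λ : 𝒣 → 𝒢 be a bounded linear operator such that ran Λ ∩ dom φ ≠ ∅. Define Λ̃ : ℝ ⊕ 𝒣 → ℝ ⊕ 𝒢 by Λ̃(ξ, x) = (ξ, Λx). Then the perspective of φ ∘ Λ equals φ̃ ∘ Λ̃ (pointwise on ℝ × 𝒣), and this function belongs to Γ₀(ℝ ⊕ 𝒣). -/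
open scoped RealInnerProductSpace Classical

noncomputable section

open scoped Topology

set_option linter.unusedSectionVars false

section Aux

lemma ereal_isup_mul {ι : Sort*} (c : ℝ) (hc : 0 < c) (g : ι → EReal) :
    (c : EReal) * ⨆ i, g i = ⨆ i, (c : EReal) * g i := by
  have hkey : ∀ a b : EReal, ((c : EReal) * a ≤ b ↔ a ≤ b / (c : EReal)) := fun a b => by
    rw [EReal.mul_comm]
    exact (EReal.le_div_iff_mul_le (by exact_mod_cast hc) (by simp)).symm
  apply le_antisymm
  · exact (hkey _ _).2 (iSup_le fun i => (hkey _ _).1 (le_iSup (fun i => (c : EReal) * g i) i))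
  · exact iSup_le fun i => mul_le_mul_of_nonneg_left (le_iSup g i) (by exact_mod_cast hc.le)

lemma ereal_isup_top {ι : Sort*} (g : ι → EReal) (h : ∀ M : ℝ, ∃ i, (M : EReal) ≤ g i) :
    ⨆ i, g i = ⊤ := by
  by_contra h'
  obtain ⟨r, hr1, hr2⟩ := EReal.exists_between_coe_real (lt_top_iff_ne_top.2 h')
  obtain ⟨i, hi⟩ := h r
  exact absurd (hi.trans (le_iSup g i)) (not_le.2 hr1)

variable {E : Type*} [NormedAddCommGroup E] [InnerProductSpace ℝ E] [CompleteSpace E]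

def minorSet (f : E → EReal) : Set (E × ℝ) :=
  {q | ∀ z : E, ((⟪z, q.1⟫ - q.2 : ℝ) : EReal) ≤ f z}

def epiSet (f : E → EReal) : Set (E × ℝ) := {q | f q.1 ≤ (q.2 : EReal)}

lemma epi_closed {f : E → EReal} (hf : LowerSemicontinuous f) : IsClosed (epiSet f) := by
  rw [← isOpen_compl_iff, isOpen_iff_mem_nhds]
  rintro ⟨z, t⟩ ht
  simp only [Set.mem_compl_iff, epiSet, Set.mem_setOf_eq, not_le] at ht
  obtain ⟨t', h1, h2⟩ := EReal.exists_between_coe_real ht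
  have h3 : t < t' := by exact_mod_cast h1
  have hz : {z' : E | (t' : EReal) < f z'} ∈ 𝓝 z := hf z _ h2
  have hmem : {z' : E | (t' : EReal) < f z'} ×ˢ Set.Iio t' ∈ 𝓝 (z, t) := by
    rw [nhds_prod_eq]
    exact Filter.prod_mem_prod hz (Iio_mem_nhds h3)
  refine Filter.mem_of_superset hmem ?_
  rintro ⟨z', s⟩ ⟨hz', hs⟩
  simp only [Set.mem_compl_iff, epiSet, Set.mem_setOf_eq, not_le]
  exact lt_trans (by exact_mod_cast hs) hz'

lemma epi_convex {f : E → EReal} (hc : ConvexE E f) : Convex ℝ (epiSet f) := by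
  rintro ⟨z, t⟩ hzt ⟨w, s⟩ hws a b ha hb hab
  simp only [epiSet, Set.mem_setOf_eq] at hzt hws ⊢
  simp only [Prod.smul_mk, Prod.mk_add_mk, smul_eq_mul]
  refine (hc z w a b ha hb hab).trans ?_
  have h2 : (a : EReal) * f z ≤ (a : EReal) * (t : EReal) :=
    mul_le_mul_of_nonneg_left hzt (by exact_mod_cast ha)
  have h3 : (b : EReal) * f w ≤ (b : EReal) * (s : EReal) :=
    mul_le_mul_of_nonneg_left hws (by exact_mod_cast hb)
  refine (add_le_add h2 h3).trans (le_of_eq ?_)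
  rw [← EReal.coe_mul, ← EReal.coe_mul, ← EReal.coe_add]

end Aux

set_option linter.unusedSectionVars false

section Biconj

variable {E : Type*} [NormedAddCommGroup E] [InnerProductSpace ℝ E] [CompleteSpace E]

/-- decomposition of a continuous linear functional on `E × ℝ` -/
lemma functional_decomp (ψ : (E × ℝ) →L[ℝ] ℝ) :
    ∃ w : E, ∀ z t, ψ (z, t) = ⟪z, w⟫ + t * ψ (0, 1) := by
  refine ⟨(InnerProductSpace.toDual ℝ E).symm (ψ.comp (ContinuousLinearMap.inl ℝ E ℝ)), ?_⟩
  intro z t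
  have h1 : ⟪z, (InnerProductSpace.toDual ℝ E).symm (ψ.comp (ContinuousLinearMap.inl ℝ E ℝ))⟫
      = ψ (z, 0) := by
    rw [real_inner_comm, InnerProductSpace.toDual_symm_apply]
    rfl
  rw [h1]
  have : (z, t) = (z, (0:ℝ)) + t • ((0:E), (1:ℝ)) := by
    simp [Prod.ext_iff]
  rw [this, map_add, map_smul, smul_eq_mul]

lemma minor_of_sep {f : E → EReal} (hbot : ∀ x, f x ≠ ⊥) {w : E} {u β : ℝ}
    (hβpos : 0 < β)
    (hsep' : ∀ z : E, ∀ t : ℝ, f z ≤ (t : EReal) → u < ⟪z, w⟫ + t * β) :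
    (-(β⁻¹) • w, -(u / β)) ∈ minorSet f := by
  intro z
  by_cases hz : f z = ⊤
  · rw [hz]; exact le_top
  · have hfz : f z = ((f z).toReal : EReal) := (EReal.coe_toReal hz (hbot z)).symm
    have h2 := hsep' z (f z).toReal (le_of_eq hfz)
    rw [hfz]
    apply EReal.coe_le_coe_iff.2
    rw [real_inner_smul_right]
    show -β⁻¹ * ⟪z, w⟫ - -(u / β) ≤ (f z).toReal
    have h3 : u * β⁻¹ < ⟪z, w⟫ * β⁻¹ + (f z).toReal := by
      have h4 := mul_lt_mul_of_pos_right h2 (inv_pos.2 hβpos)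
      rw [add_mul, mul_assoc, mul_inv_cancel₀ (ne_of_gt hβpos), mul_one] at h4
      linarith
    rw [div_eq_mul_inv]
    linarith

lemma minorSet_nonempty {f : E → EReal} (hf : Gamma0 E f) : (minorSet f).Nonempty := by
  obtain ⟨⟨hbot, x1, hx1⟩, hlsc, hcvx⟩ := hf
  set r1 : ℝ := (f x1).toReal with hr1
  have hfx1 : f x1 = (r1 : EReal) := (EReal.coe_toReal hx1 (hbot x1)).symm
  have hmem : (x1, r1 - 1) ∉ epiSet f := by
    simp only [epiSet, Set.mem_setOf_eq, hfx1, not_le]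
    exact_mod_cast sub_one_lt r1
  obtain ⟨ψ, u, hxu, hsep⟩ :=
    geometric_hahn_banach_point_closed (epi_convex hcvx) (epi_closed hlsc) hmem
  obtain ⟨w, hw⟩ := functional_decomp ψ
  set β : ℝ := ψ (0, 1) with hβ
  have hsep' : ∀ z : E, ∀ t : ℝ, f z ≤ (t : EReal) → u < ⟪z, w⟫ + t * β := by
    intro z t ht
    have := hsep (z, t) ht
    rwa [hw] at this
  rw [hw] at hxu
  have hβpos : 0 < β := by
    have h1 := hsep' x1 r1 (le_of_eq hfx1)
    nlinarith
  exact ⟨_, minor_of_sep hbot hβpos hsep'⟩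

lemma biconj {f : E → EReal} (hf : Gamma0 E f) (x : E) :
    f x = ⨆ q : minorSet f, ((⟪x, (q : E × ℝ).1⟫ - (q : E × ℝ).2 : ℝ) : EReal) := by
  obtain ⟨⟨hbot, x1, hx1⟩, hlsc, hcvx⟩ := hf
  set S := ⨆ q : minorSet f, ((⟪x, (q : E × ℝ).1⟫ - (q : E × ℝ).2 : ℝ) : EReal) with hS
  have hSle : S ≤ f x := iSup_le fun q => q.2 x
  refine le_antisymm ?_ hSle
  by_contra hlt
  obtain ⟨r, hr1, hr2⟩ := EReal.exists_between_coe_real (not_le.1 hlt)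
  have hmem : (x, r) ∉ epiSet f := by
    simp only [epiSet, Set.mem_setOf_eq, not_le]
    exact hr2
  obtain ⟨ψ, u, hxu, hsep⟩ :=
    geometric_hahn_banach_point_closed (epi_convex hcvx) (epi_closed hlsc) hmem
  obtain ⟨w, hw⟩ := functional_decomp ψ
  set β : ℝ := ψ (0, 1) with hβ
  have hsep' : ∀ z : E, ∀ t : ℝ, f z ≤ (t : EReal) → u < ⟪z, w⟫ + t * β := by
    intro z t ht
    have := hsep (z, t) ht
    rwa [hw] at this
  rw [hw] at hxu
  set r1 : ℝ := (f x1).toReal with hr1d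
  have hfx1 : f x1 = (r1 : EReal) := (EReal.coe_toReal hx1 (hbot x1)).symm
  have hβnn : 0 ≤ β := by
    by_contra hneg
    push_neg at hneg
    obtain ⟨n, hn⟩ := exists_nat_gt ((⟪x1, w⟫ + r1 * β - u) / (-β))
    rw [div_lt_iff₀ (by linarith)] at hn
    have h1 := hsep' x1 (r1 + n) (by rw [hfx1]; exact_mod_cast by linarith [Nat.cast_nonneg (α := ℝ) n])
    nlinarith
  rcases eq_or_lt_of_le hβnn with hβ0 | hβpos
  · -- β = 0 : vertical separation
    have hdom : ∀ z : E, f z ≠ ⊤ → u < ⟪z, w⟫ := by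
      intro z hz
      have hfz : f z = ((f z).toReal : EReal) := (EReal.coe_toReal hz (hbot z)).symm
      have := hsep' z (f z).toReal (le_of_eq hfz)
      rwa [← hβ0, mul_zero, add_zero] at this
    have hxw : ⟪x, w⟫ < u := by rw [← hβ0, mul_zero, add_zero] at hxu; exact hxu
    obtain ⟨q1, hq1⟩ := minorSet_nonempty ⟨⟨hbot, x1, hx1⟩, hlsc, hcvx⟩
    obtain ⟨n, hn⟩ := exists_nat_gt ((r - (⟪x, q1.1⟫ - q1.2)) / (u - ⟪x, w⟫))
    rw [div_lt_iff₀ (by linarith)] at hn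
    have hqn : (q1.1 - (n : ℝ) • w, q1.2 - n * u) ∈ minorSet f := by
      intro z
      by_cases hz : f z = ⊤
      · rw [hz]; exact le_top
      · have hfz : f z = ((f z).toReal : EReal) := (EReal.coe_toReal hz (hbot z)).symm
        have hbase : ⟪z, q1.1⟫ - q1.2 ≤ (f z).toReal := by
          have := hq1 z
          rw [hfz] at this
          exact_mod_cast this
        have hzw := hdom z hz
        rw [hfz]
        apply EReal.coe_le_coe_iff.2
        simp only [inner_sub_left, inner_sub_right, real_inner_smul_right]
        nlinarith [Nat.cast_nonneg (α := ℝ) n]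
    have hval : (r : EReal) < ((⟪x, q1.1 - (n : ℝ) • w⟫ - (q1.2 - n * u) : ℝ) : EReal) := by
      apply EReal.coe_lt_coe_iff.2
      simp only [inner_sub_right, real_inner_smul_right]
      nlinarith
    have : ((⟪x, q1.1 - (n : ℝ) • w⟫ - (q1.2 - n * u) : ℝ) : EReal) ≤ S :=
      le_iSup (fun q : minorSet f => ((⟪x, (q : E × ℝ).1⟫ - (q : E × ℝ).2 : ℝ) : EReal))
        ⟨_, hqn⟩
    exact absurd (hval.trans_le this) (not_lt.2 hr1.le)
  · -- β > 0 : get a minorant beating r at x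
    have hqmem := minor_of_sep hbot hβpos hsep'
    have hval : (r : EReal) < ((⟪x, -(β⁻¹) • w⟫ - (-(u / β)) : ℝ) : EReal) := by
      apply EReal.coe_lt_coe_iff.2
      rw [real_inner_smul_right]
      have h3 : (⟪x, w⟫ + r * β) * β⁻¹ < u * β⁻¹ :=
        mul_lt_mul_of_pos_right hxu (inv_pos.2 hβpos)
      rw [add_mul, mul_assoc, mul_inv_cancel₀ (ne_of_gt hβpos), mul_one] at h3
      rw [div_eq_mul_inv]
      linarith
    have hle : ((⟪x, -(β⁻¹) • w⟫ - (-(u / β)) : ℝ) : EReal) ≤ S :=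
      le_iSup (fun q : minorSet f => ((⟪x, (q : E × ℝ).1⟫ - (q : E × ℝ).2 : ℝ) : EReal))
        ⟨_, hqmem⟩
    exact absurd (hval.trans_le hle) (not_lt.2 hr1.le)

end Biconj

section RecPersp

variable {E : Type*} [NormedAddCommGroup E] [InnerProductSpace ℝ E] [CompleteSpace E]

lemma recFn_eq {f : E → EReal} (hf : Gamma0 E f) (y : E) :
    recFn f y = ⨆ q : minorSet f, ((⟪y, (q : E × ℝ).1⟫ : ℝ) : EReal) := by
  obtain ⟨⟨hbot, x1, hx1⟩, hlsc, hcvx⟩ := hf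
  have hf' : Gamma0 E f := ⟨⟨hbot, x1, hx1⟩, hlsc, hcvx⟩
  set T := ⨆ q : minorSet f, ((⟪y, (q : E × ℝ).1⟫ : ℝ) : EReal) with hT
  apply le_antisymm
  · refine iSup_le fun x => ?_
    rw [EReal.sub_le_iff_le_add (Or.inl (hbot x)) (Or.inl x.2)]
    rw [biconj hf' ((x : E) + y)]
    refine iSup_le fun q => ?_
    have h1 : ((⟪(x : E), (q : E × ℝ).1⟫ - (q : E × ℝ).2 : ℝ) : EReal) ≤ f x := q.2 x
    have h2 : ((⟪y, (q : E × ℝ).1⟫ : ℝ) : EReal) ≤ T :=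
      le_iSup (fun q : minorSet f => ((⟪y, (q : E × ℝ).1⟫ : ℝ) : EReal)) q
    have heq : ((⟪(x : E) + y, (q : E × ℝ).1⟫ - (q : E × ℝ).2 : ℝ) : EReal)
        = ((⟪y, (q : E × ℝ).1⟫ : ℝ) : EReal)
          + ((⟪(x : E), (q : E × ℝ).1⟫ - (q : E × ℝ).2 : ℝ) : EReal) := by
      rw [← EReal.coe_add]
      norm_cast
      rw [inner_add_left]
      ring
    rw [heq]
    exact add_le_add h2 h1
  · refine iSup_le fun q => ?_
    set S := recFn f y with hSdef
    have hSlb : ∀ (x : E), f x ≠ ⊤ → f (x + y) - f x ≤ S := fun x hx =>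
      le_iSup (fun x : {x : E // f x ≠ ⊤} => f ((x : E) + y) - f (x : E)) ⟨x, hx⟩
    by_cases hST : S = ⊤
    · rw [hST]; exact le_top
    set r1 : ℝ := (f x1).toReal with hr1d
    have hfx1 : f x1 = (r1 : EReal) := (EReal.coe_toReal hx1 (hbot x1)).symm
    have hSbot : S ≠ ⊥ := by
      intro hb
      have h3 : ((⟪x1 + y, (q : E × ℝ).1⟫ - (q : E × ℝ).2 - r1 : ℝ) : EReal) ≤ S := by
        refine le_trans ?_ (hSlb x1 hx1)
        rw [hfx1]
        have : ((⟪x1 + y, (q : E × ℝ).1⟫ - (q : E × ℝ).2 - r1 : ℝ) : EReal)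
            = ((⟪x1 + y, (q : E × ℝ).1⟫ - (q : E × ℝ).2 : ℝ) : EReal) - ((r1 : ℝ) : EReal) := by
          rw [← EReal.coe_sub]
        rw [this]
        exact EReal.sub_le_sub (q.2 _) le_rfl
      rw [hb, le_bot_iff] at h3
      exact (EReal.coe_ne_bot _) h3
    set s : ℝ := S.toReal with hsd
    have hSs : S = (s : EReal) := (EReal.coe_toReal hST hSbot).symm
    have key : ∀ n : ℕ, f (x1 + (n : ℝ) • y) ≤ ((r1 + n * s : ℝ) : EReal) := by
      intro n
      induction n with
      | zero => simp [hfx1]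
      | succ n ih =>
        have hne : f (x1 + (n : ℝ) • y) ≠ ⊤ := fun h => by
          rw [h] at ih; exact absurd ih (not_le.2 (EReal.coe_lt_top _))
        have h4 := hSlb (x1 + (n : ℝ) • y) hne
        rw [hSs, EReal.sub_le_iff_le_add (Or.inl (hbot _)) (Or.inl hne)] at h4
        have heq2 : x1 + ((n + 1 : ℕ) : ℝ) • y = x1 + (n : ℝ) • y + y := by
          push_cast
          rw [add_smul, one_smul, add_assoc]
        rw [heq2]
        refine h4.trans ?_
        refine (add_le_add le_rfl ih).trans (le_of_eq ?_)
        rw [← EReal.coe_add]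
        norm_cast
        push_cast
        ring
    have h5 : ∀ n : ℕ, ⟪x1, (q : E × ℝ).1⟫ + n * ⟪y, (q : E × ℝ).1⟫ - (q : E × ℝ).2
        ≤ r1 + n * s := by
      intro n
      have h6 := (q.2 (x1 + (n : ℝ) • y)).trans (key n)
      rw [EReal.coe_le_coe_iff] at h6
      rw [inner_add_left, real_inner_smul_left] at h6
      linarith
    have h7 : ⟪y, (q : E × ℝ).1⟫ ≤ s := by
      by_contra hcon
      push_neg at hcon
      obtain ⟨n, hn⟩ := exists_nat_gt ((r1 + (q : E × ℝ).2 - ⟪x1, (q : E × ℝ).1⟫)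
        / (⟪y, (q : E × ℝ).1⟫ - s))
      rw [div_lt_iff₀ (by linarith)] at hn
      have := h5 n
      nlinarith
    rw [hSs]
    exact_mod_cast h7

lemma persp_eq {f : E → EReal} (hf : Gamma0 E f) (p : ℝ × E) :
    persp f p = ⨆ q : (minorSet f) × ℕ,
      ((⟪p.2, ((q.1 : E × ℝ)).1⟫ - ((q.1 : E × ℝ)).2 * p.1 - (q.2 : ℝ) * p.1 : ℝ) : EReal) := by
  obtain ⟨η, x⟩ := p
  have hne := minorSet_nonempty hf
  rcases lt_trichotomy η 0 with hη | hη | hη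
  · -- η < 0
    simp only [persp, if_neg (not_lt.2 hη.le), if_neg (ne_of_lt hη)]
    symm
    apply ereal_isup_top
    intro M
    obtain ⟨q1, hq1⟩ := hne
    obtain ⟨n, hn⟩ := exists_nat_gt ((M - ⟪x, q1.1⟫ + q1.2 * η) / (-η))
    rw [div_lt_iff₀ (by linarith)] at hn
    refine ⟨(⟨q1, hq1⟩, n), ?_⟩
    apply EReal.coe_le_coe_iff.2
    nlinarith
  · -- η = 0
    subst hη
    simp only [persp, lt_irrefl, if_neg (lt_irrefl (0:ℝ)), if_pos rfl]
    rw [recFn_eq hf x]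
    apply le_antisymm
    · refine iSup_le fun q => ?_
      refine le_trans (le_of_eq ?_) (le_iSup _ (q, 0))
      norm_num
    · refine iSup_le fun q => ?_
      refine le_trans (le_of_eq ?_) (le_iSup
        (fun q : minorSet f => ((⟪x, (q : E × ℝ).1⟫ : ℝ) : EReal)) q.1)
      norm_num
  · -- η > 0
    simp only [persp, if_pos hη]
    rw [biconj hf (η⁻¹ • x), ereal_isup_mul η hη]
    apply le_antisymm
    · refine iSup_le fun q => ?_
      have heq : (η : EReal) * ((⟪η⁻¹ • x, (q : E × ℝ).1⟫ - (q : E × ℝ).2 : ℝ) : EReal)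
          = ((⟪x, (q : E × ℝ).1⟫ - (q : E × ℝ).2 * η - ((0 : ℕ) : ℝ) * η : ℝ) : EReal) := by
        rw [← EReal.coe_mul]
        norm_cast
        rw [real_inner_smul_left]
        field_simp
        ring
      rw [heq]
      exact le_iSup (fun q : (minorSet f) × ℕ =>
        ((⟪x, ((q.1 : E × ℝ)).1⟫ - ((q.1 : E × ℝ)).2 * η - (q.2 : ℝ) * η : ℝ) : EReal)) (q, 0)
    · refine iSup_le fun q => ?_
      refine le_trans ?_ (le_iSup (fun q : minorSet f =>
        (η : EReal) * ((⟪η⁻¹ • x, (q : E × ℝ).1⟫ - (q : E × ℝ).2 : ℝ) : EReal)) q.1)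
      rw [← EReal.coe_mul]
      apply EReal.coe_le_coe_iff.2
      rw [real_inner_smul_left]
      have hn0 : (0 : ℝ) ≤ (q.2 : ℝ) * η := mul_nonneg (Nat.cast_nonneg _) hη.le
      field_simp
      nlinarith

end RecPersp


/-- the perspective of `φ ∘ Λ` equals `φ̃ ∘ Λ̃` and belongs to
`Γ₀(ℝ ⊕ 𝒣)`. -/
theorem perspective_comp_linear
    {H : Type*} [NormedAddCommGroup H] [InnerProductSpace ℝ H] [CompleteSpace H]
    {G : Type*} [NormedAddCommGroup G] [InnerProductSpace ℝ G] [CompleteSpace G]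
    (φ : G → EReal) (hφ : Gamma0 G φ)
    (Λ : H →L[ℝ] G) (hran : ∃ x : H, φ (Λ x) ≠ ⊤) :
    (∀ (ξ : ℝ) (x : H),
        persp (fun w => φ (Λ w)) (ξ, x) = persp φ (ξ, Λ x)) ∧
    Gamma0 (ℝ × H) (persp (fun w => φ (Λ w))) := by
  have hΓ : Gamma0 H (fun w => φ (Λ w)) := by
    refine ⟨⟨fun w => hφ.1.1 _, hran⟩, hφ.2.1.comp Λ.continuous, ?_⟩
    intro z w a b ha hb hab
    simpa [map_add, map_smul] using hφ.2.2 (Λ z) (Λ w) a b ha hb hab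
  constructor
  · intro ξ x
    rcases lt_trichotomy ξ 0 with hξ | hξ | hξ
    · simp only [persp, if_neg (not_lt.2 hξ.le), if_neg (ne_of_lt hξ)]
    · subst hξ
      simp only [persp, if_neg (lt_irrefl (0:ℝ)), if_pos rfl]
      apply le_antisymm
      · refine iSup_le fun w => ?_
        have heq : φ (Λ ((w : H) + x)) = φ (Λ (w : H) + Λ x) := by rw [map_add]
        calc φ (Λ ((w : H) + x)) - φ (Λ (w : H))
            = φ (Λ (w : H) + Λ x) - φ (Λ (w : H)) := by rw [heq]
          _ ≤ recFn φ (Λ x) :=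
              le_iSup (fun v : {v : G // φ v ≠ ⊤} => φ ((v : G) + Λ x) - φ (v : G))
                ⟨Λ (w : H), w.2⟩
      · rw [recFn_eq hφ (Λ x), recFn_eq hΓ x]
        refine iSup_le fun q => ?_
        have hmem : ((ContinuousLinearMap.adjoint Λ) (q : G × ℝ).1, (q : G × ℝ).2)
            ∈ minorSet (fun w => φ (Λ w)) := by
          intro z
          have h1 := q.2 (Λ z)
          rwa [← ContinuousLinearMap.adjoint_inner_right Λ] at h1
        have heq : ((⟪Λ x, (q : G × ℝ).1⟫ : ℝ) : EReal)
            = ((⟪x, (ContinuousLinearMap.adjoint Λ) (q : G × ℝ).1⟫ : ℝ) : EReal) := by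
          rw [ContinuousLinearMap.adjoint_inner_right]
        rw [heq]
        exact le_iSup (fun q' : minorSet (fun w => φ (Λ w)) =>
          ((⟪x, (q' : H × ℝ).1⟫ : ℝ) : EReal)) ⟨_, hmem⟩
    · simp only [persp, if_pos hξ]
      rw [map_smul]
  · set f := fun w => φ (Λ w) with hfdef
    have hrepr := persp_eq hΓ
    obtain ⟨q1, hq1⟩ := minorSet_nonempty hΓ
    refine ⟨⟨?_, ?_⟩, ?_, ?_⟩
    · intro p hb
      have hterm : ((⟪p.2, q1.1⟫ - q1.2 * p.1 - ((0 : ℕ) : ℝ) * p.1 : ℝ) : EReal)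
          ≤ persp f p := by
        rw [hrepr p]
        exact le_iSup (fun q : (minorSet f) × ℕ =>
          ((⟪p.2, ((q.1 : H × ℝ)).1⟫ - ((q.1 : H × ℝ)).2 * p.1 - (q.2 : ℝ) * p.1 : ℝ) : EReal))
          (⟨q1, hq1⟩, 0)
      rw [hb, le_bot_iff] at hterm
      exact (EReal.coe_ne_bot _) hterm
    · obtain ⟨x1, hx1⟩ := hran
      refine ⟨(1, x1), ?_⟩
      have : persp f (1, x1) = φ (Λ x1) := by
        simp [persp, hfdef]
      rw [this]
      exact hx1
    · have hfun : persp f = fun p => ⨆ q : (minorSet f) × ℕ,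
          ((⟪p.2, ((q.1 : H × ℝ)).1⟫ - ((q.1 : H × ℝ)).2 * p.1 - (q.2 : ℝ) * p.1 : ℝ) : EReal) :=
        funext hrepr
      rw [hfun]
      apply lowerSemicontinuous_iSup
      intro q
      apply Continuous.lowerSemicontinuous
      apply continuous_coe_real_ereal.comp
      have h1 : Continuous fun p : ℝ × H => (⟪p.2, ((q.1 : H × ℝ)).1⟫ : ℝ) :=
        continuous_snd.inner continuous_const
      fun_prop
    · intro p p' a b ha hb hab
      rw [hrepr]
      refine iSup_le fun q => ?_
      set u := ((q.1 : H × ℝ)).1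
      set c := ((q.1 : H × ℝ)).2
      set n := (q.2 : ℝ)
      have hcomp1 : (a • p + b • p').1 = a * p.1 + b * p'.1 := rfl
      have hcomp2 : (a • p + b • p').2 = a • p.2 + b • p'.2 := rfl
      have hval : (⟪(a • p + b • p').2, u⟫ - c * (a • p + b • p').1 - n * (a • p + b • p').1 : ℝ)
          = a * (⟪p.2, u⟫ - c * p.1 - n * p.1) + b * (⟪p'.2, u⟫ - c * p'.1 - n * p'.1) := by
        rw [hcomp1, hcomp2, inner_add_left, real_inner_smul_left, real_inner_smul_left]
        ring
      have h1 : ((⟪p.2, u⟫ - c * p.1 - n * p.1 : ℝ) : EReal) ≤ persp f p := by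
        rw [hrepr p]
        exact le_iSup (fun q : (minorSet f) × ℕ =>
          ((⟪p.2, ((q.1 : H × ℝ)).1⟫ - ((q.1 : H × ℝ)).2 * p.1 - (q.2 : ℝ) * p.1 : ℝ) : EReal)) q
      have h2 : ((⟪p'.2, u⟫ - c * p'.1 - n * p'.1 : ℝ) : EReal) ≤ persp f p' := by
        rw [hrepr p']
        exact le_iSup (fun q : (minorSet f) × ℕ =>
          ((⟪p'.2, ((q.1 : H × ℝ)).1⟫ - ((q.1 : H × ℝ)).2 * p'.1 - (q.2 : ℝ) * p'.1 : ℝ) : EReal)) q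
      calc ((⟪(a • p + b • p').2, u⟫ - c * (a • p + b • p').1
              - n * (a • p + b • p').1 : ℝ) : EReal)
          = (a : EReal) * ((⟪p.2, u⟫ - c * p.1 - n * p.1 : ℝ) : EReal)
            + (b : EReal) * ((⟪p'.2, u⟫ - c * p'.1 - n * p'.1 : ℝ) : EReal) := by
            rw [hval, EReal.coe_add, EReal.coe_mul, EReal.coe_mul]
        _ ≤ (a : EReal) * persp f p + (b : EReal) * persp f p' :=
            add_le_add (mul_le_mul_of_nonneg_left h1 (by exact_mod_cast ha))
              (mul_le_mul_of_nonneg_left h2 (by exact_mod_cast hb))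

end
end
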